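/- arXiv:1906.06858 — 14 statements merged into one kernel-verified Lean document; each statement's English description precedes it below -/
import Mathlib

section
/- For every η with 0 < η ≤ P̄_1|h_1|² one has F(η) = σ²/η, hence F(P̄_1|h_1|²) ≤ F(η) for all such η, with strict inequality when η < P̄_1|h_1|². Consequently, any global minimizer η* of F on (0, ∞) satisfies η* ≥ P̄_1|h_1|², so that the corresponding transmit power of device 1, min(P̄_1, η*/|h_1|²), equals P̄_1 (full-power transmission). (Lemma 1) -/
/-- **Lemma 1.** Static AirComp: for `0 < η ≤ P̄₁|h₁|²`, `F η = σ²/η`;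
hence `F (P̄₁|h₁|²) ≤ F η` (strictly if `η < P̄₁|h₁|²`), so any global minimizer `η*`
of `F` on `(0,∞)` satisfies `η* ≥ P̄₁|h₁|²` and device 1 transmits with full power,
`min (P̄₁) (η*/|h₁|²) = P̄₁`. -/
theorem stmt0
    (K : ℕ) (hK : 1 ≤ K) (P h : ℕ → ℝ) (σ2 : ℝ)
    (hP : ∀ k, 1 ≤ k → k ≤ K → 0 < P k)
    (hh : ∀ k, 1 ≤ k → k ≤ K → 0 < h k)
    (hσ2 : 0 < σ2)
    (hord : ∀ k, 1 ≤ k → k < K → P k * (h k) ^ 2 ≤ P (k + 1) * (h (k + 1)) ^ 2)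
    (F : ℝ → ℝ)
    (hF : ∀ η, 0 < η →
      F η = (∑ k ∈ Finset.Icc 1 K,
          (min (Real.sqrt (P k) * h k / Real.sqrt η - 1) 0) ^ 2) + σ2 / η) :
    (∀ η, 0 < η → η ≤ P 1 * (h 1) ^ 2 → F η = σ2 / η) ∧
    (∀ η, 0 < η → η ≤ P 1 * (h 1) ^ 2 → F (P 1 * (h 1) ^ 2) ≤ F η) ∧
    (∀ η, 0 < η → η < P 1 * (h 1) ^ 2 → F (P 1 * (h 1) ^ 2) < F η) ∧
    (∀ ηstar, 0 < ηstar → (∀ η, 0 < η → F ηstar ≤ F η) →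
      P 1 * (h 1) ^ 2 ≤ ηstar ∧ min (P 1) (ηstar / (h 1) ^ 2) = P 1) := by
  have hP1 : 0 < P 1 := hP 1 le_rfl hK
  have hh1 : 0 < h 1 := hh 1 le_rfl hK
  have hQ1 : 0 < P 1 * (h 1) ^ 2 := by positivity
  -- monotone chain
  have hmono : ∀ k, 1 ≤ k → k ≤ K → P 1 * (h 1) ^ 2 ≤ P k * (h k) ^ 2 := by
    intro k hk1 hkK
    induction k with
    | zero => omega
    | succ n ih =>
      rcases Nat.eq_or_lt_of_le hk1 with h1 | h1
      · simp [← h1]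
      · have hn1 : 1 ≤ n := by omega
        have hnK : n ≤ K := by omega
        exact le_trans (ih hn1 hnK) (hord n hn1 (by omega))
  -- key: F η = σ2/η on (0, P1h1²]
  have key : ∀ η, 0 < η → η ≤ P 1 * (h 1) ^ 2 → F η = σ2 / η := by
    intro η hη hle
    rw [hF η hη]
    have hsum : (∑ k ∈ Finset.Icc 1 K,
        (min (Real.sqrt (P k) * h k / Real.sqrt η - 1) 0) ^ 2) = 0 := by
      apply Finset.sum_eq_zero
      intro k hk
      rw [Finset.mem_Icc] at hk
      have hPk := hP k hk.1 hk.2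
      have hhk := hh k hk.1 hk.2
      have h1 : (1:ℝ) ≤ Real.sqrt (P k) * h k / Real.sqrt η := by
        rw [le_div_iff₀ (Real.sqrt_pos.mpr hη), one_mul]
        have : Real.sqrt η ≤ Real.sqrt (P k * (h k) ^ 2) :=
          Real.sqrt_le_sqrt (le_trans hle (hmono k hk.1 hk.2))
        calc Real.sqrt η ≤ Real.sqrt (P k * (h k) ^ 2) := this
          _ = Real.sqrt (P k) * h k := by
            rw [Real.sqrt_mul hPk.le, Real.sqrt_sq hhk.le]
      have : min (Real.sqrt (P k) * h k / Real.sqrt η - 1) 0 = 0 := by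
        rw [min_eq_right]; linarith
      simp [this]
    rw [hsum, zero_add]
  refine ⟨key, ?_, ?_, ?_⟩
  · intro η hη hle
    rw [key η hη hle, key _ hQ1 le_rfl]
    exact div_le_div_of_nonneg_left hσ2.le hη hle
  · intro η hη hlt
    rw [key η hη hlt.le, key _ hQ1 le_rfl]
    exact div_lt_div_of_pos_left hσ2 hη hlt
  · intro ηstar hηs hmin
    have hge : P 1 * (h 1) ^ 2 ≤ ηstar := by
      by_contra hc
      push_neg at hc
      have h1 : F (P 1 * (h 1) ^ 2) < F ηstar := by
        rw [key ηstar hηs hc.le, key _ hQ1 le_rfl]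
        exact div_lt_div_of_pos_left hσ2 hηs hc
      exact absurd (hmin _ hQ1) (not_le.mpr h1)
    refine ⟨hge, min_eq_left ?_⟩
    rw [le_div_iff₀ (by positivity)]
    exact hge
end

section
/- For each 1 ≤ k ≤ K, the function F_k is strictly decreasing on (0, η̃_k] and strictly increasing on [η̃_k, ∞); in particular, η̃_k is the unique global minimizer of F_k on (0, ∞). (Lemma 2, unimodality) -/
/-- **Lemma 2, unimodality.** For each `1 ≤ k ≤ K`, the function
`F_k(η) = ∑_{i=1}^k (√(P̄_i)|h_i|/√η − 1)² + σ²/η` is strictly decreasing on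
`(0, η̃_k]` and strictly increasing on `[η̃_k, ∞)`, where
`η̃_k = ((σ² + ∑_{i=1}^k P̄_i|h_i|²)/S_k)²`; in particular `η̃_k` is the unique
global minimizer of `F_k` on `(0, ∞)`. -/
theorem stmt1
    (K : ℕ) (hK : 1 ≤ K) (P h : ℕ → ℝ) (σ2 : ℝ)
    (hP : ∀ k, 1 ≤ k → k ≤ K → 0 < P k)
    (hh : ∀ k, 1 ≤ k → k ≤ K → 0 < h k)
    (hσ2 : 0 < σ2)
    (hord : ∀ k, 1 ≤ k → k < K → P k * (h k) ^ 2 ≤ P (k + 1) * (h (k + 1)) ^ 2)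
    (S ηt : ℕ → ℝ) (F : ℕ → ℝ → ℝ)
    (hS : ∀ k, S k = ∑ i ∈ Finset.Icc 1 k, Real.sqrt (P i) * h i)
    (hηt : ∀ k, ηt k = ((σ2 + ∑ i ∈ Finset.Icc 1 k, P i * (h i) ^ 2) / S k) ^ 2)
    (hF : ∀ k η, F k η =
      (∑ i ∈ Finset.Icc 1 k, (Real.sqrt (P i) * h i / Real.sqrt η - 1) ^ 2) + σ2 / η) :
    ∀ k, 1 ≤ k → k ≤ K →
      StrictAntiOn (F k) (Set.Ioc 0 (ηt k)) ∧
      StrictMonoOn (F k) (Set.Ici (ηt k)) ∧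
      (∀ η, 0 < η → η ≠ ηt k → F k (ηt k) < F k η) := by
  intro k hk1 hkK
  have hmem : ∀ i ∈ Finset.Icc 1 k, 1 ≤ i ∧ i ≤ K := by
    intro i hi
    rw [Finset.mem_Icc] at hi
    exact ⟨hi.1, hi.2.trans hkK⟩
  set A : ℝ := ∑ i ∈ Finset.Icc 1 k, P i * (h i) ^ 2 with hAdef
  have hApos : 0 < A := by
    apply Finset.sum_pos
    · intro i hi
      obtain ⟨h1, h2⟩ := hmem i hi
      exact mul_pos (hP i h1 h2) (pow_pos (hh i h1 h2) 2)
    · exact ⟨1, Finset.mem_Icc.mpr ⟨le_refl 1, hk1⟩⟩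
  have hSpos : 0 < S k := by
    rw [hS]
    apply Finset.sum_pos
    · intro i hi
      obtain ⟨h1, h2⟩ := hmem i hi
      exact mul_pos (Real.sqrt_pos.mpr (hP i h1 h2)) (hh i h1 h2)
    · exact ⟨1, Finset.mem_Icc.mpr ⟨le_refl 1, hk1⟩⟩
  set C : ℝ := σ2 + A with hCdef
  have hCpos : 0 < C := add_pos hσ2 hApos
  have hηtk : ηt k = (C / S k) ^ 2 := by rw [hηt]
  have hηt_pos : 0 < ηt k := by
    rw [hηtk]; exact pow_pos (div_pos hCpos hSpos) 2
  have hsqηt : Real.sqrt (ηt k) = C / S k := by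
    rw [hηtk, Real.sqrt_sq (div_pos hCpos hSpos).le]
  have htstar : 1 / Real.sqrt (ηt k) = S k / C := by
    rw [hsqηt, one_div_div]
  have hFeq : ∀ η : ℝ, 0 < η →
      F k η = C * (1 / Real.sqrt η) ^ 2 - 2 * S k * (1 / Real.sqrt η) + k := by
    intro η hη
    have hsη : 0 < Real.sqrt η := Real.sqrt_pos.mpr hη
    have h1 : (1 / Real.sqrt η) ^ 2 = 1 / η := by
      rw [div_pow, one_pow, Real.sq_sqrt hη.le]
    have hsum : (∑ i ∈ Finset.Icc 1 k, (Real.sqrt (P i) * h i / Real.sqrt η - 1) ^ 2)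
        = A * (1 / η) - 2 * (S k) * (1 / Real.sqrt η) + k := by
      have step : ∀ i ∈ Finset.Icc 1 k,
          (Real.sqrt (P i) * h i / Real.sqrt η - 1) ^ 2
          = P i * (h i) ^ 2 * (1 / η)
            - 2 * (Real.sqrt (P i) * h i) * (1 / Real.sqrt η) + 1 := by
        intro i hi
        obtain ⟨hi1, hi2⟩ := hmem i hi
        have ha2 : (Real.sqrt (P i) * h i) ^ 2 = P i * (h i) ^ 2 := by
          rw [mul_pow, Real.sq_sqrt (hP i hi1 hi2).le]
        calc (Real.sqrt (P i) * h i / Real.sqrt η - 1) ^ 2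
            = (Real.sqrt (P i) * h i) ^ 2 * (1 / Real.sqrt η) ^ 2
              - 2 * (Real.sqrt (P i) * h i) * (1 / Real.sqrt η) + 1 := by ring
          _ = _ := by rw [ha2, h1]
      rw [Finset.sum_congr rfl step, Finset.sum_add_distrib, Finset.sum_sub_distrib,
        ← Finset.sum_mul, ← Finset.sum_mul, ← Finset.mul_sum, ← hAdef, ← hS,
        Finset.sum_const, Nat.card_Icc]
      simp [Nat.add_sub_cancel]
    rw [hF, hsum, h1, hCdef]
    ring
  refine ⟨?_, ?_, ?_⟩
  · intro x hx y hy hxy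
    obtain ⟨hx0, hxle⟩ := hx
    obtain ⟨hy0, hyle⟩ := hy
    have hsx : 0 < Real.sqrt x := Real.sqrt_pos.mpr hx0
    have hsy : 0 < Real.sqrt y := Real.sqrt_pos.mpr hy0
    have h1 : 1 / Real.sqrt y < 1 / Real.sqrt x :=
      one_div_lt_one_div_of_lt hsx (Real.sqrt_lt_sqrt hx0.le hxy)
    have h2 : S k / C ≤ 1 / Real.sqrt y := by
      rw [← htstar]
      exact one_div_le_one_div_of_le hsy (Real.sqrt_le_sqrt hyle)
    rw [hFeq x hx0, hFeq y hy0]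
    set tx := 1 / Real.sqrt x with htx
    set ty := 1 / Real.sqrt y with hty
    have hSC : S k ≤ C * ty := by
      rw [div_le_iff₀ hCpos] at h2
      linarith
    have hd : 0 < tx - ty := sub_pos.mpr h1
    have he : 0 < C * (tx + ty) - 2 * S k := by
      nlinarith [mul_pos hCpos hd]
    nlinarith [mul_pos hd he]
  · intro x hx y hy hxy
    have hx0 : 0 < x := lt_of_lt_of_le hηt_pos hx
    have hy0 : 0 < y := lt_of_lt_of_le hηt_pos hy
    have hsx : 0 < Real.sqrt x := Real.sqrt_pos.mpr hx0
    have hsηt : 0 < Real.sqrt (ηt k) := Real.sqrt_pos.mpr hηt_pos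
    have h1 : 1 / Real.sqrt y < 1 / Real.sqrt x :=
      one_div_lt_one_div_of_lt hsx (Real.sqrt_lt_sqrt hx0.le hxy)
    have h2 : 1 / Real.sqrt x ≤ S k / C := by
      rw [← htstar]
      exact one_div_le_one_div_of_le hsηt (Real.sqrt_le_sqrt hx)
    rw [hFeq x hx0, hFeq y hy0]
    set tx := 1 / Real.sqrt x with htx
    set ty := 1 / Real.sqrt y with hty
    have hSC : C * tx ≤ S k := by
      rw [le_div_iff₀ hCpos] at h2
      linarith
    have hd : 0 < tx - ty := sub_pos.mpr h1
    have he : 0 < 2 * S k - C * (tx + ty) := by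
      nlinarith [mul_pos hCpos hd]
    nlinarith [mul_pos hd he]
  · intro η hη hne
    have hsη : 0 < Real.sqrt η := Real.sqrt_pos.mpr hη
    have htne : 1 / Real.sqrt η ≠ S k / C := by
      intro heq
      apply hne
      have h1 : Real.sqrt η = C / S k := by
        rw [← one_div_one_div (Real.sqrt η), heq, one_div_div]
      rw [← Real.sq_sqrt hη.le, h1, hηtk]
    rw [hFeq η hη, hFeq (ηt k) hηt_pos, htstar]
    set t := 1 / Real.sqrt η with htdef
    set u := S k / C with hudef
    have hCt : C * u = S k := by
      rw [hudef]; field_simp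
    have h0 : 0 < (t - u) ^ 2 :=
      lt_of_le_of_ne (sq_nonneg _) (Ne.symm (pow_ne_zero 2 (sub_ne_zero.mpr htne)))
    rw [← hCt]
    nlinarith [mul_pos hCpos h0]
end

section
/- For each 1 ≤ k ≤ K and any real numbers 0 < a ≤ b, the point η_k = min(b, max(η̃_k, a)) satisfies F_k(η_k) ≤ F_k(η) for all η ∈ [a, b]; that is, the projection of the stationary point η̃_k onto the interval [a, b] minimizes F_k over [a, b]. (Lemma 2, eq. (16)) -/
/-- **Lemma 2, eq. (16).** For each `1 ≤ k ≤ K` and any reals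
`0 < a ≤ b`, the projection `η_k = min(b, max(η̃_k, a))` of the stationary point
`η̃_k` onto `[a, b]` minimizes `F_k` over `[a, b]`. -/
theorem stmt2
    (K : ℕ) (hK : 1 ≤ K) (P h : ℕ → ℝ) (σ2 : ℝ)
    (hP : ∀ k, 1 ≤ k → k ≤ K → 0 < P k)
    (hh : ∀ k, 1 ≤ k → k ≤ K → 0 < h k)
    (hσ2 : 0 < σ2)
    (hord : ∀ k, 1 ≤ k → k < K → P k * (h k) ^ 2 ≤ P (k + 1) * (h (k + 1)) ^ 2)
    (S ηt : ℕ → ℝ) (F : ℕ → ℝ → ℝ)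
    (hS : ∀ k, S k = ∑ i ∈ Finset.Icc 1 k, Real.sqrt (P i) * h i)
    (hηt : ∀ k, ηt k = ((σ2 + ∑ i ∈ Finset.Icc 1 k, P i * (h i) ^ 2) / S k) ^ 2)
    (hF : ∀ k η, F k η =
      (∑ i ∈ Finset.Icc 1 k, (Real.sqrt (P i) * h i / Real.sqrt η - 1) ^ 2) + σ2 / η) :
    ∀ k, 1 ≤ k → k ≤ K → ∀ a b : ℝ, 0 < a → a ≤ b →
      ∀ η ∈ Set.Icc a b, F k (min b (max (ηt k) a)) ≤ F k η := by
  intro k hk1 hkK a b ha hab η hη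
  obtain ⟨hηa, hηb⟩ := hη
  set A := ∑ i ∈ Finset.Icc 1 k, P i * (h i) ^ 2 with hA
  set D := σ2 + A with hDdef
  have hApos : 0 ≤ A := by
    apply Finset.sum_nonneg
    intro i hi
    simp only [Finset.mem_Icc] at hi
    exact le_of_lt (mul_pos (hP i hi.1 (hi.2.trans hkK)) (pow_pos (hh i hi.1 (hi.2.trans hkK)) 2))
  have hDpos : 0 < D := by positivity
  have hSpos : 0 < S k := by
    rw [hS]
    apply Finset.sum_pos
    · intro i hi
      simp only [Finset.mem_Icc] at hi
      exact mul_pos (Real.sqrt_pos.2 (hP i hi.1 (hi.2.trans hkK))) (hh i hi.1 (hi.2.trans hkK))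
    · exact ⟨1, Finset.mem_Icc.2 ⟨le_refl 1, hk1⟩⟩
  set t := S k / D with htdef
  have htpos : 0 < t := div_pos hSpos hDpos
  -- key identity
  have key : ∀ x : ℝ, 0 < x →
      F k x = D * (1 / Real.sqrt x - t) ^ 2 + ((k : ℝ) - (S k) ^ 2 / D) := by
    intro x hx
    have hsx : 0 < Real.sqrt x := Real.sqrt_pos.2 hx
    have hxx : Real.sqrt x ^ 2 = x := Real.sq_sqrt hx.le
    have hinv : (1 / Real.sqrt x) ^ 2 = 1 / x := by rw [div_pow, one_pow, hxx]
    have hpt : ∀ i ∈ Finset.Icc 1 k,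
        (Real.sqrt (P i) * h i / Real.sqrt x - 1) ^ 2
          = P i * (h i) ^ 2 * (1 / x)
            - (Real.sqrt (P i) * h i) * (2 * (1 / Real.sqrt x)) + 1 := by
      intro i hi
      simp only [Finset.mem_Icc] at hi
      have hPi : 0 ≤ P i := (hP i hi.1 (hi.2.trans hkK)).le
      have hsq : Real.sqrt (P i) ^ 2 = P i := Real.sq_sqrt hPi
      have e2 : (Real.sqrt (P i) * h i) ^ 2 = P i * (h i) ^ 2 := by
        rw [mul_pow, hsq]
      calc (Real.sqrt (P i) * h i / Real.sqrt x - 1) ^ 2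
          = (Real.sqrt (P i) * h i) ^ 2 * (1 / Real.sqrt x) ^ 2
              - (Real.sqrt (P i) * h i) * (2 * (1 / Real.sqrt x)) + 1 := by ring
        _ = _ := by rw [e2, hinv]
    rw [hF, Finset.sum_congr rfl hpt]
    rw [Finset.sum_add_distrib, Finset.sum_sub_distrib, ← Finset.sum_mul, ← Finset.sum_mul,
      Finset.sum_const, Nat.card_Icc, ← hA, ← hS]
    have hcard : (k + 1 - 1) • (1 : ℝ) = (k : ℝ) := by simp
    rw [hcard]
    have hDt : D * t = S k := by rw [htdef]; field_simp
    have hDt2 : D * t ^ 2 = (S k) ^ 2 / D := by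
      rw [htdef]; field_simp
    have hexp : D * (1 / Real.sqrt x - t) ^ 2
        = D * (1 / Real.sqrt x) ^ 2 - 2 * (D * t) * (1 / Real.sqrt x) + D * t ^ 2 := by ring
    rw [hexp, hinv, hDt, hDt2]
    have hσx : σ2 / x = σ2 * (1 / x) := by ring
    rw [hσx, hDdef]
    ring
  have hηtval : ηt k = (D / S k) ^ 2 := by rw [hηt, ← hA, ← hDdef]
  have hηtpos : 0 < ηt k := by rw [hηtval]; positivity
  have hsηtpos : 0 < Real.sqrt (ηt k) := Real.sqrt_pos.2 hηtpos
  have hsηt : Real.sqrt (ηt k) = 1 / t := by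
    rw [hηtval, Real.sqrt_sq (le_of_lt (div_pos hDpos hSpos)), htdef, one_div_div]
  have ht' : t = 1 / Real.sqrt (ηt k) := by rw [hsηt]; field_simp
  set η0 := min b (max (ηt k) a) with hη0def
  have hη0pos : 0 < η0 :=
    lt_min (ha.trans_le hab) (lt_max_of_lt_right ha)
  have hηpos : 0 < η := ha.trans_le hηa
  rw [key η0 hη0pos, key η hηpos]
  apply add_le_add_left
  apply mul_le_mul_of_nonneg_left _ hDpos.le
  rcases le_total (ηt k) a with hc1 | hc1
  · -- η0 = a, and t ≥ 1/√a ≥ 1/√η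
    have he : η0 = a := by rw [hη0def, max_eq_right hc1, min_eq_right hab]
    rw [he]
    have h1 : 1 / Real.sqrt a ≤ t := by
      rw [ht']
      exact one_div_le_one_div_of_le hsηtpos (Real.sqrt_le_sqrt hc1)
    have h2 : 1 / Real.sqrt η ≤ 1 / Real.sqrt a :=
      one_div_le_one_div_of_le (Real.sqrt_pos.2 ha) (Real.sqrt_le_sqrt hηa)
    nlinarith [h1, h2]
  · rcases le_total b (ηt k) with hc2 | hc2
    · -- η0 = b, and t ≤ 1/√b ≤ 1/√η
      have he : η0 = b := by rw [hη0def, max_eq_left hc1, min_eq_left hc2]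
      rw [he]
      have hb : 0 < b := ha.trans_le hab
      have h1 : t ≤ 1 / Real.sqrt b := by
        rw [ht']
        exact one_div_le_one_div_of_le (Real.sqrt_pos.2 hb) (Real.sqrt_le_sqrt hc2)
      have h2 : 1 / Real.sqrt b ≤ 1 / Real.sqrt η :=
        one_div_le_one_div_of_le (Real.sqrt_pos.2 hηpos) (Real.sqrt_le_sqrt hηb)
      nlinarith [h1, h2]
    · -- η0 = ηt k, squared distance is 0
      have he : η0 = ηt k := by rw [hη0def, max_eq_left hc1, min_eq_right hc2]
      rw [he, hsηt]
      have hz : 1 / (1 / t) - t = 0 := by field_simp; ring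
      rw [hz]
      simpa using sq_nonneg (1 / Real.sqrt η - t)
end

section
/- Let η* = η̃_{k*} and define p_k* = P̄_k for 1 ≤ k ≤ k* and p_k* = η*/|h_k|² for k* < k ≤ K. Then: (i) P̄_k|h_k|² ≤ η* for all k ≤ k* and P̄_k|h_k|² ≥ η* for all k > k*, so in particular 0 ≤ p_k* ≤ P̄_k for every k; and (ii) G(p*, η*) ≤ G(p, η) for every p with 0 ≤ p_k ≤ P̄_k (1 ≤ k ≤ K) and every η > 0; i.e., the threshold-based policy (p*, η*) globally solves problem (P2). (Theorem 1) -/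
/-- quadratic helper -/
noncomputable def quadF (α β γ t : ℝ) : ℝ := α * t ^ 2 - 2 * β * t + γ

lemma quad_le (α β γ v t : ℝ) (hα : 0 < α) (hv : α * v = β) :
    quadF α β γ v ≤ quadF α β γ t := by
  subst hv; simp only [quadF]; nlinarith [mul_nonneg hα.le (sq_nonneg (t - v))]

lemma quad_lt (α β γ v t : ℝ) (hα : 0 < α) (hv : α * v = β) (hne : v ≠ t) :
    quadF α β γ v < quadF α β γ t := by
  have h0 : t - v ≠ 0 := sub_ne_zero.mpr (Ne.symm hne)
  have h1 : 0 < (t - v) ^ 2 := lt_of_le_of_ne (sq_nonneg _) (Ne.symm (pow_ne_zero 2 h0))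
  subst hv; simp only [quadF]; nlinarith [mul_pos hα h1]

lemma quad_monoR (α β γ s t : ℝ) (hα : 0 < α) (hs : β ≤ α * s) (hst : s ≤ t) :
    quadF α β γ s ≤ quadF α β γ t := by
  simp only [quadF]
  nlinarith [mul_nonneg (sub_nonneg.2 hst) (sub_nonneg.2 hs), sq_nonneg (t - s)]

lemma quad_monoL (α β γ s t : ℝ) (hα : 0 < α) (ht : α * t ≤ β) (hst : s ≤ t) :
    quadF α β γ t ≤ quadF α β γ s := by
  simp only [quadF]
  nlinarith [mul_nonneg (sub_nonneg.2 hst) (sub_nonneg.2 ht), sq_nonneg (t - s)]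

lemma sq_cmp (x y : ℝ) (_hx : 0 ≤ x) (hxy : x ≤ y) (hy : y ≤ 1) : (y - 1) ^ 2 ≤ (x - 1) ^ 2 := by
  nlinarith

set_option maxHeartbeats 4000000 in
/-- **Theorem 1.** With `η* = η̃_{k*}` and the threshold-based powers
`p_k* = P̄_k` for `k ≤ k*` and `p_k* = η*/|h_k|²` for `k > k*`:
(i) `P̄_k|h_k|² ≤ η*` for `k ≤ k*` and `P̄_k|h_k|² ≥ η*` for `k > k*`, so `0 ≤ p_k* ≤ P̄_k`;
(ii) `(p*, η*)` globally solves problem (P2), i.e. `G(p*, η*) ≤ G(p, η)` for all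
feasible `p` and all `η > 0`. -/
theorem stmt3
    (K : ℕ) (hK : 1 ≤ K) (P h : ℕ → ℝ) (σ2 : ℝ)
    (hP : ∀ k, 1 ≤ k → k ≤ K → 0 < P k)
    (hh : ∀ k, 1 ≤ k → k ≤ K → 0 < h k)
    (hσ2 : 0 < σ2)
    (hord : ∀ k, 1 ≤ k → k < K → P k * (h k) ^ 2 ≤ P (k + 1) * (h (k + 1)) ^ 2)
    (S ηt : ℕ → ℝ) (F : ℕ → ℝ → ℝ) (G : (ℕ → ℝ) → ℝ → ℝ)
    (hS : ∀ k, S k = ∑ i ∈ Finset.Icc 1 k, Real.sqrt (P i) * h i)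
    (hηt : ∀ k, ηt k = ((σ2 + ∑ i ∈ Finset.Icc 1 k, P i * (h i) ^ 2) / S k) ^ 2)
    (hF : ∀ k η, F k η =
      (∑ i ∈ Finset.Icc 1 k, (Real.sqrt (P i) * h i / Real.sqrt η - 1) ^ 2) + σ2 / η)
    (hG : ∀ p η, G p η =
      (∑ k ∈ Finset.Icc 1 K, (Real.sqrt (p k) * h k / Real.sqrt η - 1) ^ 2) + σ2 / η)
    -- the clipped minimizers η_k^cl and the selected index k*
    (ηcl : ℕ → ℝ)
    (hηcl : ∀ k, 1 ≤ k → k < K →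
      ηcl k = min (P (k + 1) * (h (k + 1)) ^ 2) (max (ηt k) (P k * (h k) ^ 2)))
    (hηclK : ηcl K = max (ηt K) (P K * (h K) ^ 2))
    (kstar : ℕ) (hk1 : 1 ≤ kstar) (hk2 : kstar ≤ K)
    (hkmin : ∀ j, 1 ≤ j → j ≤ K → F kstar (ηcl kstar) ≤ F j (ηcl j))
    -- the threshold-based power-control policy
    (pstar : ℕ → ℝ)
    (hpstar1 : ∀ k, 1 ≤ k → k ≤ kstar → pstar k = P k)
    (hpstar2 : ∀ k, kstar < k → k ≤ K → pstar k = ηt kstar / (h k) ^ 2) :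
    -- (i)
    ((∀ k, 1 ≤ k → k ≤ kstar → P k * (h k) ^ 2 ≤ ηt kstar) ∧
     (∀ k, kstar < k → k ≤ K → ηt kstar ≤ P k * (h k) ^ 2) ∧
     (∀ k, 1 ≤ k → k ≤ K → 0 ≤ pstar k ∧ pstar k ≤ P k)) ∧
    -- (ii)
    (∀ (p : ℕ → ℝ) (η : ℝ), (∀ k, 1 ≤ k → k ≤ K → 0 ≤ p k ∧ p k ≤ P k) → 0 < η →
      G pstar (ηt kstar) ≤ G p η) := by
  set a : ℕ → ℝ := fun i => Real.sqrt (P i) * h i with ha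
  set c : ℕ → ℝ := fun j => σ2 + ∑ i ∈ Finset.Icc 1 j, P i * (h i) ^ 2 with hc
  have hapos : ∀ i, 1 ≤ i → i ≤ K → 0 < a i := fun i h1 h2 =>
    mul_pos (Real.sqrt_pos.mpr (hP i h1 h2)) (hh i h1 h2)
  have hasq : ∀ i, 1 ≤ i → i ≤ K → a i ^ 2 = P i * h i ^ 2 := by
    intro i h1 h2
    simp only [ha, mul_pow, Real.sq_sqrt (hP i h1 h2).le]
  have hsqmono : ∀ i j, 1 ≤ i → i ≤ j → j ≤ K → P i * h i ^ 2 ≤ P j * h j ^ 2 := by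
    intro i j h1 hij hjK
    induction j, hij using Nat.le_induction with
    | base => exact le_rfl
    | succ n hn ih =>
      exact le_trans (ih (by omega)) (hord n (by omega) (by omega))
  have hamono : ∀ i j, 1 ≤ i → i ≤ j → j ≤ K → a i ≤ a j := by
    intro i j h1 hij hjK
    have h2 := hsqmono i j h1 hij hjK
    rw [← hasq i h1 (hij.trans hjK), ← hasq j (h1.trans hij) hjK] at h2
    have h3 := Real.sqrt_le_sqrt h2
    rwa [Real.sqrt_sq (hapos i h1 (hij.trans hjK)).le,
      Real.sqrt_sq (hapos j (h1.trans hij) hjK).le] at h3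
  have hcpos : ∀ j, j ≤ K → 0 < c j := by
    intro j hjK
    have : (0:ℝ) ≤ ∑ i ∈ Finset.Icc 1 j, P i * (h i) ^ 2 := by
      refine Finset.sum_nonneg fun i hi => ?_
      rw [Finset.mem_Icc] at hi
      exact mul_nonneg (hP i hi.1 (hi.2.trans hjK)).le (sq_nonneg _)
    simp only [hc]; linarith
  have hSpos : ∀ j, 1 ≤ j → j ≤ K → 0 < S j := by
    intro j h1 hjK
    rw [hS]
    refine Finset.sum_pos (fun i hi => ?_) (Finset.nonempty_Icc.mpr h1)
    rw [Finset.mem_Icc] at hi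
    exact hapos i hi.1 (hi.2.trans hjK)
  have hηteq : ∀ j, ηt j = (c j / S j) ^ 2 := fun j => hηt j
  have hηtpos : ∀ j, 1 ≤ j → j ≤ K → 0 < ηt j := by
    intro j h1 hjK
    rw [hηteq]
    exact pow_pos (div_pos (hcpos j hjK) (hSpos j h1 hjK)) 2
  have hsqrtηt : ∀ j, 1 ≤ j → j ≤ K → (Real.sqrt (ηt j))⁻¹ = S j / c j := by
    intro j h1 hjK
    rw [hηteq, Real.sqrt_sq (div_pos (hcpos j hjK) (hSpos j h1 hjK)).le, inv_div]
  have hS' : ∀ k, S k = ∑ i ∈ Finset.Icc 1 k, a i := by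
    intro k; rw [hS]
  have hFQ : ∀ j, j ≤ K → ∀ η, 0 < η → F j η = quadF (c j) (S j) j ((Real.sqrt η)⁻¹) := by
    intro j hjK η hη
    have hsq2 : ((Real.sqrt η)⁻¹) ^ 2 = η⁻¹ := by rw [inv_pow, Real.sq_sqrt hη.le]
    rw [hF]
    have hterm : ∀ i ∈ Finset.Icc 1 j, (Real.sqrt (P i) * h i / Real.sqrt η - 1) ^ 2
        = (P i * h i ^ 2) * ((Real.sqrt η)⁻¹) ^ 2 - 2 * (Real.sqrt η)⁻¹ * a i + 1 := by
      intro i hi; rw [Finset.mem_Icc] at hi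
      rw [← hasq i hi.1 (hi.2.trans hjK)]
      simp only [ha]; rw [div_eq_mul_inv]; ring
    rw [Finset.sum_congr rfl hterm, Finset.sum_add_distrib, Finset.sum_sub_distrib,
      ← Finset.sum_mul, ← Finset.mul_sum, ← hS', Finset.sum_const, Nat.card_Icc]
    simp only [quadF, hc, nsmul_eq_mul, mul_one, Nat.add_sub_cancel]
    rw [div_eq_mul_inv σ2, ← hsq2]
    ring
  have hFsucc : ∀ m η, F (m + 1) η = F m η + (a (m + 1) / Real.sqrt η - 1) ^ 2 := by
    intro m η
    rw [hF, hF, Finset.sum_Icc_succ_top (Nat.le_add_left 1 m)]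
    simp only [ha]; ring
  have hcsucc : ∀ m, c (m + 1) = c m + P (m + 1) * h (m + 1) ^ 2 := by
    intro m
    simp only [hc]
    rw [Finset.sum_Icc_succ_top (Nat.le_add_left 1 m)]; ring
  have hSsucc : ∀ m, S (m + 1) = S m + a (m + 1) := by
    intro m
    rw [hS', hS', Finset.sum_Icc_succ_top (Nat.le_add_left 1 m)]
  have hc1 : c 1 = σ2 + a 1 ^ 2 := by
    simp only [hc]
    rw [Finset.Icc_self, Finset.sum_singleton, hasq 1 le_rfl hK]
  have hS1 : S 1 = a 1 := by
    rw [hS', Finset.Icc_self, Finset.sum_singleton]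
  have hle : ∀ m k, 1 ≤ m → m ≤ K → 1 ≤ k → k ≤ K → (ηt m ≤ a k ^ 2 ↔ c m ≤ a k * S m) := by
    intro m k hm1 hmK hk1' hkK
    rw [hηteq, pow_le_pow_iff_left₀ (div_pos (hcpos m hmK) (hSpos m hm1 hmK)).le
      (hapos k hk1' hkK).le two_ne_zero, div_le_iff₀ (hSpos m hm1 hmK)]
  have hge : ∀ m k, 1 ≤ m → m ≤ K → 1 ≤ k → k ≤ K → (a k ^ 2 ≤ ηt m ↔ a k * S m ≤ c m) := by
    intro m k hm1 hmK hk1' hkK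
    rw [hηteq, pow_le_pow_iff_left₀ (hapos k hk1' hkK).le
      (div_pos (hcpos m hmK) (hSpos m hm1 hmK)).le two_ne_zero, le_div_iff₀ (hSpos m hm1 hmK)]
  have hFsq : ∀ j, j ≤ K → ∀ k, 1 ≤ k → k ≤ K →
      F j (a k ^ 2) = quadF (c j) (S j) j (a k)⁻¹ := by
    intro j hjK k hk1' hkK
    rw [hFQ j hjK _ (pow_pos (hapos k hk1' hkK) 2), Real.sqrt_sq (hapos k hk1' hkK).le]
  have hFηt : ∀ j, 1 ≤ j → j ≤ K → F j (ηt j) = quadF (c j) (S j) j (S j / c j) := by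
    intro j hj1 hjK
    rw [hFQ j hjK _ (hηtpos j hj1 hjK), hsqrtηt j hj1 hjK]
  have hvert : ∀ j, j ≤ K → c j * (S j / c j) = S j := fun j hjK =>
    mul_div_cancel₀ _ (hcpos j hjK).ne'
  -- the clipped value η_j^cl, rewritten through a
  have hclv : ∀ j, 1 ≤ j → j < K →
      ηcl j = min (a (j + 1) ^ 2) (max (ηt j) (a j ^ 2)) := by
    intro j hj1 hjK
    rw [hηcl j hj1 hjK, hasq j hj1 hjK.le, hasq (j + 1) (by omega) hjK]
  have hclvK : ηcl K = max (ηt K) (a K ^ 2) := by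
    rw [hηclK, hasq K hK le_rfl]
  -- the key comparison: F_j(ηcl_j) ≤ Q_j(t) whenever t lies in the j-th interval
  have hKey : ∀ j, 1 ≤ j → j ≤ K → ∀ t : ℝ, 0 < t → a j * t ≤ 1 →
      (j < K → 1 ≤ a (j + 1) * t) → F j (ηcl j) ≤ quadF (c j) (S j) j t := by
    intro j hj1 hjK t ht hta htb
    have hajpos := hapos j hj1 hjK
    have hcj := hcpos j hjK
    have hSj := hSpos j hj1 hjK
    have htle : t ≤ (a j)⁻¹ := by
      rw [← one_div, le_div_iff₀ hajpos]; linarith [mul_comm (a j) t]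
    rcases eq_or_lt_of_le hjK with hjK' | hjK'
    · subst hjK'
      rw [hclvK]
      rcases le_or_gt (c j) (a j * S j) with hcase | hcase
      · rw [max_eq_right ((hle j j hj1 le_rfl hj1 le_rfl).mpr hcase),
          hFsq j le_rfl j hj1 le_rfl]
        refine quad_monoL _ _ _ _ _ hcj ?_ htle
        rw [← div_eq_mul_inv, div_le_iff₀ hajpos]; linarith [mul_comm (a j) (S j)]
      · rw [max_eq_left ((hge j j hj1 le_rfl hj1 le_rfl).mpr hcase.le),
          hFηt j hj1 le_rfl]
        exact quad_le _ _ _ _ _ hcj (hvert j le_rfl)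
    · have hj1K : j + 1 ≤ K := hjK'
      have haj1pos := hapos (j + 1) (by omega) hj1K
      have htb' := htb hjK'
      have htge : (a (j + 1))⁻¹ ≤ t := by
        rw [← one_div, div_le_iff₀ haj1pos]; linarith [mul_comm (a (j + 1)) t]
      rw [hclv j hj1 hjK']
      rcases le_or_gt (c j) (a j * S j) with hcase | hcase
      · -- η̃_j ≤ a_j² : clip at a_j²
        have hsq : a j ^ 2 ≤ a (j + 1) ^ 2 := by
          rw [hasq j hj1 hjK, hasq (j + 1) (by omega) hj1K]
          exact hsqmono j (j + 1) hj1 (by omega) hj1K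
        rw [max_eq_right ((hle j j hj1 hjK hj1 hjK).mpr hcase), min_eq_right hsq,
          hFsq j hjK j hj1 hjK]
        refine quad_monoL _ _ _ _ _ hcj ?_ htle
        rw [← div_eq_mul_inv, div_le_iff₀ hajpos]; linarith [mul_comm (a j) (S j)]
      · rcases le_or_gt (c j) (a (j + 1) * S j) with hcase2 | hcase2
        · -- a_j² < η̃_j ≤ a_{j+1}² : unclipped
          rw [max_eq_left ((hge j j hj1 hjK hj1 hjK).mpr hcase.le),
            min_eq_right ((hle j (j + 1) hj1 hjK (by omega) hj1K).mpr hcase2),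
            hFηt j hj1 hjK]
          exact quad_le _ _ _ _ _ hcj (hvert j hjK)
        · -- η̃_j > a_{j+1}² : clip at a_{j+1}²
          have h1 : a j * S j ≤ c j := le_trans
            (by nlinarith [hamono j (j + 1) hj1 (by omega) hj1K]) hcase2.le
          rw [max_eq_left ((hge j j hj1 hjK hj1 hjK).mpr h1),
            min_eq_left ((hge j (j + 1) hj1 hjK (by omega) hj1K).mpr hcase2.le),
            hFsq j hjK (j + 1) (by omega) hj1K]
          refine quad_monoR _ _ _ _ _ hcj ?_ htge
          rw [← div_eq_mul_inv, le_div_iff₀ haj1pos]; linarith [mul_comm (a (j + 1)) (S j)]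
  have hstar_lo : a kstar * S kstar ≤ c kstar := by
    by_contra hcon
    push_neg at hcon
    have claim : ∀ j, 1 ≤ j → j ≤ K → c j < a j * S j →
        ∃ i, 1 ≤ i ∧ i ≤ K ∧ F i (ηcl i) < F j (a j ^ 2) := by
      intro j
      induction j using Nat.strong_induction_on with
      | _ j ih =>
        intro hj1 hjK hcj
        obtain ⟨m, rfl⟩ : ∃ m, j = m + 1 := ⟨j - 1, by omega⟩
        rcases Nat.eq_zero_or_pos m with rfl | hm1
        · exfalso
          simp only [Nat.zero_add] at hcj
          rw [hc1, hS1] at hcj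
          nlinarith [sq_nonneg (a 1)]
        · have hmK : m ≤ K := by omega
          have hmK' : m < K := by omega
          have ham1 := hapos (m + 1) (by omega) hjK
          have hampos := hapos m hm1 hmK
          have hkey0 : c m < a (m + 1) * S m := by
            have h1 := hcsucc m; have h2 := hSsucc m
            have h3 := hasq (m + 1) (by omega) hjK
            nlinarith [hcj]
          have hz : (a (m + 1) / Real.sqrt (a (m + 1) ^ 2) - 1) ^ 2 = 0 := by
            rw [Real.sqrt_sq ham1.le, div_self ham1.ne']; ring
          rcases le_or_gt (a m * S m) (c m) with hA | hB
          · refine ⟨m, hm1, hmK, ?_⟩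
            have hclm : ηcl m = ηt m := by
              rw [hclv m hm1 hmK', max_eq_left ((hge m m hm1 hmK hm1 hmK).mpr hA),
                min_eq_right ((hle m (m + 1) hm1 hmK (by omega) hjK).mpr hkey0.le)]
            rw [hclm, hFηt m hm1 hmK, hFsucc m, hz, add_zero,
              hFsq m hmK (m + 1) (by omega) hjK]
            refine quad_lt _ _ _ _ _ (hcpos m hmK) (hvert m hmK) ?_
            have hlt2 : (a (m + 1))⁻¹ < S m / c m := by
              rw [inv_eq_one_div, div_lt_div_iff₀ ham1 (hcpos m hmK)]
              nlinarith [hkey0]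
            exact ne_of_gt hlt2
          · obtain ⟨i, hi1, hiK, hlt⟩ := ih m (by omega) hm1 hmK hB
            refine ⟨i, hi1, hiK, lt_of_lt_of_le hlt ?_⟩
            rw [hFsucc m, hz, add_zero, hFsq m hmK m hm1 hmK,
              hFsq m hmK (m + 1) (by omega) hjK]
            refine quad_monoL _ _ _ _ _ (hcpos m hmK) ?_ ?_
            · rw [← div_eq_mul_inv, div_le_iff₀ hampos]
              nlinarith [hB]
            · exact inv_anti₀ hampos (hamono m (m + 1) hm1 (by omega) hjK)
    obtain ⟨i, hi1, hiK, hlt⟩ := claim kstar hk1 hk2 hcon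
    have hmax : max (ηt kstar) (a kstar ^ 2) = a kstar ^ 2 :=
      max_eq_right ((hle kstar kstar hk1 hk2 hk1 hk2).mpr hcon.le)
    have hcl : ηcl kstar = a kstar ^ 2 := by
      rcases eq_or_lt_of_le hk2 with heq | hlt2
      · rw [heq] at hmax ⊢; rw [hclvK, hmax]
      · have hsq : a kstar ^ 2 ≤ a (kstar + 1) ^ 2 := by
          rw [hasq kstar hk1 hk2, hasq (kstar + 1) (by omega) hlt2]
          exact hsqmono kstar (kstar + 1) hk1 (by omega) hlt2
        rw [hclv kstar hk1 hlt2, hmax, min_eq_right hsq]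
    rw [hcl] at hkmin
    exact absurd (hkmin i hi1 hiK) (not_le.mpr hlt)
  have hstar_hi : kstar < K → c kstar ≤ a (kstar + 1) * S kstar := by
    intro hkK
    by_contra hcon
    push_neg at hcon
    -- upward descent claim
    have claim : ∀ d j, 1 ≤ j → j ≤ K → K ≤ j + d → a j * S j < c j →
        ∃ i, 1 ≤ i ∧ i ≤ K ∧ F i (ηcl i) < F j (a j ^ 2) := by
      intro d
      induction d with
      | zero =>
        intro j hj1 hjK hd hcj
        have hjK' : j = K := by omega
        subst hjK'
        refine ⟨j, hj1, le_rfl, ?_⟩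
        have hclj : ηcl j = ηt j := by
          rw [hclvK, max_eq_left ((hge j j hj1 le_rfl hj1 le_rfl).mpr hcj.le)]
        rw [hclj, hFηt j hj1 le_rfl, hFsq j le_rfl j hj1 le_rfl]
        refine quad_lt _ _ _ _ _ (hcpos j le_rfl) (hvert j le_rfl) ?_
        have hlt2 : S j / c j < (a j)⁻¹ := by
          rw [inv_eq_one_div, div_lt_div_iff₀ (hcpos j le_rfl) (hapos j hj1 le_rfl)]
          nlinarith [hcj]
        exact ne_of_lt hlt2
      | succ d ihd =>
        intro j hj1 hjK hd hcj
        rcases eq_or_lt_of_le hjK with hjK' | hjK'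
        · subst hjK'
          refine ⟨j, hj1, le_rfl, ?_⟩
          have hclj : ηcl j = ηt j := by
            rw [hclvK, max_eq_left ((hge j j hj1 le_rfl hj1 le_rfl).mpr hcj.le)]
          rw [hclj, hFηt j hj1 le_rfl, hFsq j le_rfl j hj1 le_rfl]
          refine quad_lt _ _ _ _ _ (hcpos j le_rfl) (hvert j le_rfl) ?_
          have hlt2 : S j / c j < (a j)⁻¹ := by
            rw [inv_eq_one_div, div_lt_div_iff₀ (hcpos j le_rfl) (hapos j hj1 le_rfl)]
            nlinarith [hcj]
          exact ne_of_lt hlt2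
        · have hj1K : j + 1 ≤ K := hjK'
          have hajpos := hapos j hj1 hjK
          have haj1pos := hapos (j + 1) (by omega) hj1K
          rcases le_or_gt (c j) (a (j + 1) * S j) with h2 | h2
          · -- clip inactive at j : strict win at j
            refine ⟨j, hj1, hjK, ?_⟩
            have hclj : ηcl j = ηt j := by
              rw [hclv j hj1 hjK', max_eq_left ((hge j j hj1 hjK hj1 hjK).mpr hcj.le),
                min_eq_right ((hle j (j + 1) hj1 hjK (by omega) hj1K).mpr h2)]
            rw [hclj, hFηt j hj1 hjK, hFsq j hjK j hj1 hjK]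
            refine quad_lt _ _ _ _ _ (hcpos j hjK) (hvert j hjK) ?_
            have hlt2 : S j / c j < (a j)⁻¹ := by
              rw [inv_eq_one_div, div_lt_div_iff₀ (hcpos j hjK) hajpos]
              nlinarith [hcj]
            exact ne_of_lt hlt2
          · -- recurse upward
            have hnext : a (j + 1) * S (j + 1) < c (j + 1) := by
              have h1 := hcsucc j; have h2' := hSsucc j
              have h3 := hasq (j + 1) (by omega) hj1K
              nlinarith [h2]
            obtain ⟨i, hi1, hiK, hlt⟩ := ihd (j + 1) (by omega) hj1K (by omega) hnext
            refine ⟨i, hi1, hiK, lt_of_lt_of_le hlt ?_⟩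
            have hz : (a (j + 1) / Real.sqrt (a (j + 1) ^ 2) - 1) ^ 2 = 0 := by
              rw [Real.sqrt_sq haj1pos.le, div_self haj1pos.ne']; ring
            rw [hFsucc j, hz, add_zero, hFsq j hjK j hj1 hjK,
              hFsq j hjK (j + 1) (by omega) hj1K]
            refine quad_monoR _ _ _ _ _ (hcpos j hjK) ?_ ?_
            · rw [← div_eq_mul_inv, le_div_iff₀ haj1pos]
              nlinarith [h2]
            · exact inv_anti₀ hajpos (hamono j (j + 1) hj1 (by omega) hj1K)
    -- apply the claim at kstar + 1
    have hnext : a (kstar + 1) * S (kstar + 1) < c (kstar + 1) := by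
      rw [hcsucc kstar, hSsucc kstar, ← hasq (kstar + 1) (by omega) hkK]
      nlinarith [hcon]
    obtain ⟨i, hi1, hiK, hlt⟩ := claim (K - (kstar + 1)) (kstar + 1) (by omega) hkK
      (by omega) hnext
    -- ηcl kstar = a (kstar+1)^2
    have hlo : a kstar * S kstar ≤ c kstar := le_trans
      (by nlinarith [hamono kstar (kstar + 1) hk1 (by omega) hkK,
        hSpos kstar hk1 hk2]) hcon.le
    have hcl : ηcl kstar = a (kstar + 1) ^ 2 := by
      rw [hclv kstar hk1 hkK, max_eq_left ((hge kstar kstar hk1 hk2 hk1 hk2).mpr hlo),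
        min_eq_left ((hge kstar (kstar + 1) hk1 hk2 (by omega) hkK).mpr hcon.le)]
    have hz : (a (kstar + 1) / Real.sqrt (a (kstar + 1) ^ 2) - 1) ^ 2 = 0 := by
      have := hapos (kstar + 1) (by omega) hkK
      rw [Real.sqrt_sq this.le, div_self this.ne']; ring
    have heq2 : F kstar (ηcl kstar) = F (kstar + 1) (a (kstar + 1) ^ 2) := by
      rw [hcl, hFsucc kstar, hz, add_zero]
    rw [heq2] at hkmin
    exact absurd (hkmin i hi1 hiK) (not_le.mpr hlt)
  classical
  have hclstar : ηcl kstar = ηt kstar := by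
    have hmax := max_eq_left ((hge kstar kstar hk1 hk2 hk1 hk2).mpr hstar_lo)
    rcases eq_or_lt_of_le hk2 with heq | hlt2
    · rw [heq] at hmax ⊢; rw [hclvK, hmax]
    · rw [hclv kstar hk1 hlt2, hmax,
        min_eq_right ((hle kstar (kstar + 1) hk1 hk2 (by omega) hlt2).mpr (hstar_hi hlt2))]
  have part1a : ∀ k, 1 ≤ k → k ≤ kstar → P k * h k ^ 2 ≤ ηt kstar := by
    intro k h1' h2'
    rw [← hasq k h1' (h2'.trans hk2)]
    calc a k ^ 2 ≤ a kstar ^ 2 := by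
          rw [hasq k h1' (h2'.trans hk2), hasq kstar hk1 hk2]
          exact hsqmono k kstar h1' h2' hk2
      _ ≤ ηt kstar := (hge kstar kstar hk1 hk2 hk1 hk2).mpr hstar_lo
  have part1b : ∀ k, kstar < k → k ≤ K → ηt kstar ≤ P k * h k ^ 2 := by
    intro k h1' h2'
    have hkK : kstar < K := lt_of_lt_of_le h1' h2'
    rw [← hasq k (by omega) h2']
    calc ηt kstar ≤ a (kstar + 1) ^ 2 :=
          (hle kstar (kstar + 1) hk1 hk2 (by omega) hkK).mpr (hstar_hi hkK)
      _ ≤ a k ^ 2 := by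
          rw [hasq (kstar + 1) (by omega) hkK, hasq k (by omega) h2']
          exact hsqmono (kstar + 1) k (by omega) h1' h2'
  have part1c : ∀ k, 1 ≤ k → k ≤ K → 0 ≤ pstar k ∧ pstar k ≤ P k := by
    intro k h1' h2'
    rcases le_or_gt k kstar with hle' | hgt
    · rw [hpstar1 k h1' hle']; exact ⟨(hP k h1' h2').le, le_rfl⟩
    · rw [hpstar2 k hgt h2']
      have hh2 := hh k h1' h2'
      constructor
      · apply div_nonneg _ (sq_nonneg _)
        rw [hηteq]; positivity
      · rw [div_le_iff₀ (pow_pos hh2 2)]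
        have := part1b k hgt h2'
        linarith [mul_comm (P k) (h k ^ 2)]
  refine ⟨⟨part1a, part1b, part1c⟩, ?_⟩
  -- part (ii)
  intro p η hp hη
  have hsqrtη : 0 < Real.sqrt η := Real.sqrt_pos.mpr hη
  have hGstar : G pstar (ηt kstar) = F kstar (ηcl kstar) := by
    rw [hclstar, hG]
    have e1 : Finset.Icc 1 K = Finset.Ioc 0 K := Finset.Icc_add_one_left_eq_Ioc 0 K
    have e2 : Finset.Icc 1 kstar = Finset.Ioc 0 kstar := Finset.Icc_add_one_left_eq_Ioc 0 kstar
    rw [e1, ← Finset.sum_Ioc_consecutive _ (Nat.zero_le kstar) hk2, ← e2]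
    have hzero : ∑ k ∈ Finset.Ioc kstar K,
        (Real.sqrt (pstar k) * h k / Real.sqrt (ηt kstar) - 1) ^ 2 = 0 := by
      refine Finset.sum_eq_zero fun k hk => ?_
      rw [Finset.mem_Ioc] at hk
      have hhk := hh k (by omega) hk.2
      rw [hpstar2 k hk.1 hk.2, Real.sqrt_div (hηtpos kstar hk1 hk2).le,
        Real.sqrt_sq hhk.le, div_mul_cancel₀ _ hhk.ne',
        div_self (Real.sqrt_pos.mpr (hηtpos kstar hk1 hk2)).ne', sub_self]
      ring
    have hfirst : ∑ k ∈ Finset.Icc 1 kstar,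
        (Real.sqrt (pstar k) * h k / Real.sqrt (ηt kstar) - 1) ^ 2
        = ∑ k ∈ Finset.Icc 1 kstar,
        (Real.sqrt (P k) * h k / Real.sqrt (ηt kstar) - 1) ^ 2 := by
      refine Finset.sum_congr rfl fun k hk => ?_
      rw [Finset.mem_Icc] at hk
      rw [hpstar1 k hk.1 hk.2]
    rw [hzero, hfirst, add_zero, hF]
  rw [hGstar]
  rcases le_or_gt (a 1 ^ 2) η with hbig | hsmall
  · -- the index j of the interval containing η
    have h1s : (1 : ℕ) ∈ (Finset.Icc 1 K).filter (fun k => P k * h k ^ 2 ≤ η) := by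
      rw [Finset.mem_filter, Finset.mem_Icc]
      refine ⟨⟨le_rfl, hK⟩, ?_⟩
      rw [← hasq 1 le_rfl hK]; exact hbig
    have hne : ((Finset.Icc 1 K).filter (fun k => P k * h k ^ 2 ≤ η)).Nonempty := ⟨1, h1s⟩
    set j := ((Finset.Icc 1 K).filter (fun k => P k * h k ^ 2 ≤ η)).max' hne with hj
    have hjs := Finset.max'_mem _ hne
    rw [Finset.mem_filter, Finset.mem_Icc] at hjs
    obtain ⟨⟨hj1, hjK⟩, hjη⟩ := hjs
    have hjη' : a j ^ 2 ≤ η := by rw [hasq j hj1 hjK]; exact hjη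
    have hupper : j < K → η < a (j + 1) ^ 2 := by
      intro hjK'
      by_contra hcon2; push_neg at hcon2
      have hmem : j + 1 ∈ (Finset.Icc 1 K).filter (fun k => P k * h k ^ 2 ≤ η) := by
        rw [Finset.mem_filter, Finset.mem_Icc]
        exact ⟨⟨by omega, hjK'⟩, by rw [← hasq (j + 1) (by omega) hjK']; exact hcon2⟩
      have hlem := Finset.le_max' _ (j + 1) hmem
      rw [← hj] at hlem
      omega
    have hta : a j * (Real.sqrt η)⁻¹ ≤ 1 := by
      rw [← div_eq_mul_inv, div_le_one hsqrtη]
      calc a j = Real.sqrt (a j ^ 2) := (Real.sqrt_sq (hapos j hj1 hjK).le).symm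
        _ ≤ Real.sqrt η := Real.sqrt_le_sqrt hjη'
    have htb : j < K → 1 ≤ a (j + 1) * (Real.sqrt η)⁻¹ := by
      intro hjK'
      rw [← div_eq_mul_inv, le_div_iff₀ hsqrtη, one_mul]
      calc Real.sqrt η ≤ Real.sqrt (a (j + 1) ^ 2) := Real.sqrt_le_sqrt (hupper hjK').le
        _ = a (j + 1) := Real.sqrt_sq (hapos (j + 1) (by omega) hjK').le
    calc F kstar (ηcl kstar) ≤ F j (ηcl j) := hkmin j hj1 hjK
      _ ≤ quadF (c j) (S j) j ((Real.sqrt η)⁻¹) :=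
          hKey j hj1 hjK _ (inv_pos.mpr hsqrtη) hta htb
      _ = F j η := (hFQ j hjK η hη).symm
      _ ≤ G p η := by
          rw [hF, hG]
          have hsum : ∀ k ∈ Finset.Icc 1 j,
              (Real.sqrt (P k) * h k / Real.sqrt η - 1) ^ 2
              ≤ (Real.sqrt (p k) * h k / Real.sqrt η - 1) ^ 2 := by
            intro k hk; rw [Finset.mem_Icc] at hk
            have hk1' := hk.1
            have hkK' := hk.2.trans hjK
            have hhk := hh k hk1' hkK'
            refine sq_cmp _ _ ?_ ?_ ?_
            · exact div_nonneg (mul_nonneg (Real.sqrt_nonneg _) hhk.le) hsqrtη.le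
            · exact (div_le_div_iff_of_pos_right hsqrtη).mpr
                (mul_le_mul_of_nonneg_right (Real.sqrt_le_sqrt (hp k hk1' hkK').2) hhk.le)
            · rw [div_le_one hsqrtη]
              calc Real.sqrt (P k) * h k = a k := rfl
                _ ≤ a j := hamono k j hk1' hk.2 hjK
                _ ≤ Real.sqrt η := by
                    calc a j = Real.sqrt (a j ^ 2) := (Real.sqrt_sq (hapos j hj1 hjK).le).symm
                      _ ≤ Real.sqrt η := Real.sqrt_le_sqrt hjη'
          have h1' := Finset.sum_le_sum hsum
          have h2'' : ∑ k ∈ Finset.Icc 1 j, (Real.sqrt (p k) * h k / Real.sqrt η - 1) ^ 2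
              ≤ ∑ k ∈ Finset.Icc 1 K, (Real.sqrt (p k) * h k / Real.sqrt η - 1) ^ 2 :=
            Finset.sum_le_sum_of_subset_of_nonneg (Finset.Icc_subset_Icc_right hjK)
              (fun k _ _ => sq_nonneg _)
          linarith
  · -- η below the first breakpoint
    have ha1 := hapos 1 le_rfl hK
    have key1 : F kstar (ηcl kstar) ≤ quadF (c 1) (S 1) ((1:ℕ):ℝ) ((a 1)⁻¹) := by
      refine le_trans (hkmin 1 le_rfl hK)
        (hKey 1 le_rfl hK ((a 1)⁻¹) (inv_pos.mpr ha1) ?_ ?_)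
      · rw [mul_inv_cancel₀ ha1.ne']
      · intro h1K
        rw [← div_eq_mul_inv, le_div_iff₀ ha1, one_mul]
        exact hamono 1 2 le_rfl (by omega) h1K
    have hq1 : quadF (c 1) (S 1) ((1:ℕ):ℝ) ((a 1)⁻¹) = σ2 / a 1 ^ 2 := by
      push_cast
      rw [hc1, hS1]; simp only [quadF]; field_simp; ring
    have hG' : σ2 / η ≤ G p η := by
      rw [hG]
      have hnn : (0:ℝ) ≤ ∑ k ∈ Finset.Icc 1 K,
          (Real.sqrt (p k) * h k / Real.sqrt η - 1) ^ 2 :=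
        Finset.sum_nonneg fun k _ => sq_nonneg _
      linarith
    have hmono2 : σ2 / a 1 ^ 2 ≤ σ2 / η := by
      apply div_le_div_of_nonneg_left hσ2.le hη hsmall.le
    push_cast at key1
    linarith
end

section
/- The index k* has the following properties: (1) P̄_{k*}|h_{k*}|² ≤ η̃_{k*}, and if k* < K also η̃_{k*} ≤ P̄_{k*+1}|h_{k*+1}|²; (2) P̄_k|h_k|² ≤ η̃_{k−1} for every k with 2 ≤ k ≤ k*, and P̄_k|h_k|² ≥ η̃_{k−1} for every k with k*+1 ≤ k ≤ K and k ≥ 2; (3) η̃_{k*} ≤ η̃_j for every 1 ≤ j ≤ K, i.e., k* minimizes k ↦ η̃_k. (Lemma 3) -/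
/-!
Write `a_i = √P̄_i |h_i|`, `A_k = σ² + Σ_{i ≤ k} a_i²`, so that `√η̃_k = A_k / S_k`. Then
`√η̃_{k+1} = (A_k + a_{k+1}²) / (S_k + a_{k+1})` is the mediant of `A_k / S_k` and
`a_{k+1}²/a_{k+1}`, so `η̃_{k+1}` lies between `η̃_k` and `a_{k+1}²`. With `a_k² ≤ a_{k+1}²` this
makes `a_k² ≤ η̃_k` propagate downwards and `η̃_k ≤ a_{k+1}²` propagate upwards, and `η̃` decreases
before and increases after any index where both hold; this gives (2) and (3) from (1).

For (1): in `u = 1/√η`, `F_k = A_k u² - 2 S_k u + k` is a parabola with vertex at `η = η̃_k`, and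
`F_{k+1} = F_k` at `η = a_{k+1}²`. If `η̃_k < a_k²`, then `η_k^cl = a_k²` and
`F_k(a_k²) = F_{k-1}(a_k²) > F_{k-1}(η_{k-1}^cl)`, unless the clamp of index `k - 1` also sits at
`a_k²`; then `a_{k-1} = a_k` and the argument moves down one index, which must end since
`a_1² < η̃_1`. The case `a_{k+1}² < η̃_k` is symmetric, ending at `k = K`, where nothing clamps from
above.
-/

open Finset Real

namespace AirComp

variable (σ2 : ℝ) (a : ℕ → ℝ)

-- With `a i = √P̄_i |h_i|`: `powerSum` is `A_k`, `ampSum` is `S_k`, `tildeEta` is `η̃_k`,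
-- `mse` is `F_k` and `clampedEta K` is `k ↦ η_k^cl`.
def powerSum (k : ℕ) : ℝ := σ2 + ∑ i ∈ Icc 1 k, a i ^ 2

def ampSum (k : ℕ) : ℝ := ∑ i ∈ Icc 1 k, a i

noncomputable def optRatio (k : ℕ) : ℝ := powerSum σ2 a k / ampSum a k

noncomputable def tildeEta (k : ℕ) : ℝ := optRatio σ2 a k ^ 2

noncomputable def mse (k : ℕ) (η : ℝ) : ℝ :=
  ∑ i ∈ Icc 1 k, (a i / √η - 1) ^ 2 + σ2 / η

noncomputable def clampedEta (K k : ℕ) : ℝ :=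
  if k < K then min (a (k + 1) ^ 2) (max (tildeEta σ2 a k) (a k ^ 2))
  else max (tildeEta σ2 a k) (a k ^ 2)

structure Setup (K : ℕ) : Prop where
  noise_pos : 0 < σ2
  pos : ∀ i, 1 ≤ i → i ≤ K → 0 < a i
  sq_le_sq_succ : ∀ k, 1 ≤ k → k < K → a k ^ 2 ≤ a (k + 1) ^ 2

theorem mediant_sub_mul {A S y : ℝ} (hS : S ≠ 0) (hSy : S + y ≠ 0) :
    ((A + y ^ 2) / (S + y) - A / S) * (S + y) = y * (y - A / S) := by
  field_simp; ring

theorem sub_mediant_mul {A S y : ℝ} (hS : S ≠ 0) (hSy : S + y ≠ 0) :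
    (y - (A + y ^ 2) / (S + y)) * (S + y) = S * (y - A / S) := by
  field_simp; ring

theorem sign_iff_of_mul_eq_mul {u v p q : ℝ} (hp : 0 < p) (hq : 0 < q) (h : u * p = q * v) :
    (0 ≤ u ↔ 0 ≤ v) ∧ (u ≤ 0 ↔ v ≤ 0) := by
  have h' : -u * p = q * -v := by linarith
  refine ⟨?_, ?_⟩
  · rw [← mul_nonneg_iff_of_pos_right hp, h, mul_nonneg_iff_of_pos_left hq]
  · rw [← neg_nonneg, ← mul_nonneg_iff_of_pos_right hp, h', mul_nonneg_iff_of_pos_left hq,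
      neg_nonneg]

variable {σ2 a} {K k : ℕ}

theorem powerSum_succ : powerSum σ2 a (k + 1) = powerSum σ2 a k + a (k + 1) ^ 2 := by
  rw [powerSum, powerSum, sum_Icc_succ_top (Nat.le_add_left 1 k), add_assoc]

theorem ampSum_succ : ampSum a (k + 1) = ampSum a k + a (k + 1) :=
  sum_Icc_succ_top (Nat.le_add_left 1 k) a

theorem powerSum_pos (hσ : 0 < σ2) : 0 < powerSum σ2 a k := by
  unfold powerSum; positivity

theorem sq_lt_tildeEta_one (hσ : 0 < σ2) (ha : 0 < a 1) : a 1 ^ 2 < tildeEta σ2 a 1 := by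
  have h : a 1 < optRatio σ2 a 1 := by
    rw [optRatio, powerSum, ampSum, Icc_self, sum_singleton, sum_singleton, lt_div_iff₀ ha]
    linarith
  exact pow_lt_pow_left₀ h ha.le two_ne_zero

theorem mse_eq_vertex {η : ℝ} (hP : powerSum σ2 a k ≠ 0) (hη : 0 < η) :
    mse σ2 a k η = powerSum σ2 a k * ((√η)⁻¹ - (optRatio σ2 a k)⁻¹) ^ 2
      + (k - ampSum a k ^ 2 / powerSum σ2 a k) := by
  have hsum : ∑ i ∈ Icc 1 k, (a i / √η - 1) ^ 2
      = (∑ i ∈ Icc 1 k, a i ^ 2) * ((√η)⁻¹) ^ 2 - 2 * ampSum a k * (√η)⁻¹ + k := by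
    have hcard : (k : ℝ) = ∑ i ∈ Icc 1 k, (1 : ℝ) := by simp
    simp only [ampSum, sum_mul, mul_sum, ← sum_sub_distrib]
    rw [hcard, ← sum_add_distrib]
    exact sum_congr rfl fun i _ => by ring
  have hσ : σ2 / η = σ2 * ((√η)⁻¹) ^ 2 := by rw [inv_pow, sq_sqrt hη.le, div_eq_mul_inv]
  rw [mse, hsum, hσ, optRatio, inv_div]
  unfold powerSum at *
  field_simp
  ring

theorem mse_succ_sq (hy : 0 < a (k + 1)) :
    mse σ2 a (k + 1) (a (k + 1) ^ 2) = mse σ2 a k (a (k + 1) ^ 2) := by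
  rw [mse, mse, sum_Icc_succ_top (Nat.le_add_left 1 k), sqrt_sq hy.le, div_self hy.ne']
  ring

theorem inv_sqrt_lt_inv_sqrt {x y : ℝ} (hx : 0 < x) (hxy : x < y) : (√y)⁻¹ < (√x)⁻¹ :=
  inv_strictAnti₀ (sqrt_pos.2 hx) (sqrt_lt_sqrt hx.le hxy)

theorem inv_sqrt_tildeEta (hr : 0 ≤ optRatio σ2 a k) :
    (√(tildeEta σ2 a k))⁻¹ = (optRatio σ2 a k)⁻¹ := by
  rw [tildeEta, sqrt_sq hr]

theorem mse_strictMonoOn (hP : 0 < powerSum σ2 a k) (hr : 0 < optRatio σ2 a k) :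
    StrictMonoOn (mse σ2 a k) (Set.Ici (tildeEta σ2 a k)) := by
  intro η₁ h₁ η₂ _ h₁₂
  have hη₁ : 0 < η₁ := (pow_pos hr 2).trans_le h₁
  have hφ₁ : (√η₁)⁻¹ ≤ (optRatio σ2 a k)⁻¹ := by
    rw [← inv_sqrt_tildeEta hr.le]
    exact inv_anti₀ (sqrt_pos.2 (pow_pos hr 2)) (sqrt_le_sqrt h₁)
  have hφ₁₂ := inv_sqrt_lt_inv_sqrt hη₁ h₁₂
  have hsq : ((√η₁)⁻¹ - (optRatio σ2 a k)⁻¹) ^ 2 < ((√η₂)⁻¹ - (optRatio σ2 a k)⁻¹) ^ 2 := by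
    nlinarith
  rw [mse_eq_vertex hP.ne' hη₁, mse_eq_vertex hP.ne' (hη₁.trans h₁₂)]
  linarith [mul_lt_mul_of_pos_left hsq hP]

theorem mse_strictAntiOn (hP : 0 < powerSum σ2 a k) (hr : 0 < optRatio σ2 a k) :
    StrictAntiOn (mse σ2 a k) (Set.Ioc 0 (tildeEta σ2 a k)) := by
  intro η₁ h₁ η₂ h₂ h₁₂
  have hφ₂ : (optRatio σ2 a k)⁻¹ ≤ (√η₂)⁻¹ := by
    rw [← inv_sqrt_tildeEta hr.le]
    exact inv_anti₀ (sqrt_pos.2 h₂.1) (sqrt_le_sqrt h₂.2)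
  have hφ₁₂ := inv_sqrt_lt_inv_sqrt h₁.1 h₁₂
  have hsq : ((√η₂)⁻¹ - (optRatio σ2 a k)⁻¹) ^ 2 < ((√η₁)⁻¹ - (optRatio σ2 a k)⁻¹) ^ 2 := by
    nlinarith
  rw [mse_eq_vertex hP.ne' h₁.1, mse_eq_vertex hP.ne' h₂.1]
  linarith [mul_lt_mul_of_pos_left hsq hP]

theorem clampedEta_le_sq_succ (hkK : k < K) : clampedEta σ2 a K k ≤ a (k + 1) ^ 2 := by
  grind [clampedEta]

theorem tildeEta_le_clampedEta (h : k < K → tildeEta σ2 a k ≤ a (k + 1) ^ 2) :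
    tildeEta σ2 a k ≤ clampedEta σ2 a K k := by
  grind [clampedEta]

theorem clampedEta_le_tildeEta (h : a k ^ 2 ≤ tildeEta σ2 a k) :
    clampedEta σ2 a K k ≤ tildeEta σ2 a k := by
  grind [clampedEta]

theorem lt_and_clampedEta_eq_of_clampedEta_lt (h : clampedEta σ2 a K k < tildeEta σ2 a k) :
    k < K ∧ clampedEta σ2 a K k = a (k + 1) ^ 2 := by
  grind [clampedEta]

namespace Setup

variable (hs : Setup σ2 a K)
include hs

theorem ampSum_pos (hk : 1 ≤ k) (hkK : k ≤ K) : 0 < ampSum a k :=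
  sum_pos (fun i hi => hs.pos i (mem_Icc.1 hi).1 ((mem_Icc.1 hi).2.trans hkK))
    ⟨1, by simp [hk]⟩

theorem optRatio_pos (hk : 1 ≤ k) (hkK : k ≤ K) : 0 < optRatio σ2 a k :=
  div_pos (powerSum_pos hs.noise_pos) (hs.ampSum_pos hk hkK)

theorem optRatio_succ_sub_mul (hk : 1 ≤ k) (hkK : k < K) :
    (optRatio σ2 a (k + 1) - optRatio σ2 a k) * ampSum a (k + 1) =
      a (k + 1) * (a (k + 1) - optRatio σ2 a k) := by
  rw [optRatio, optRatio, powerSum_succ, ampSum_succ]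
  exact mediant_sub_mul (hs.ampSum_pos hk hkK.le).ne'
    (by rw [← ampSum_succ]; exact (hs.ampSum_pos (by omega) hkK).ne')

theorem sub_optRatio_succ_mul (hk : 1 ≤ k) (hkK : k < K) :
    (a (k + 1) - optRatio σ2 a (k + 1)) * ampSum a (k + 1) =
      ampSum a k * (a (k + 1) - optRatio σ2 a k) := by
  rw [optRatio, optRatio, powerSum_succ, ampSum_succ]
  exact sub_mediant_mul (hs.ampSum_pos hk hkK.le).ne'
    (by rw [← ampSum_succ]; exact (hs.ampSum_pos (by omega) hkK).ne')

theorem mediant_nonneg (hk : 1 ≤ k) (hkK : k < K) :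
    0 ≤ optRatio σ2 a k ∧ 0 ≤ optRatio σ2 a (k + 1) ∧ 0 ≤ a (k + 1) :=
  ⟨(hs.optRatio_pos hk hkK.le).le, (hs.optRatio_pos (by omega) hkK).le,
    (hs.pos (k + 1) (by omega) hkK).le⟩

theorem tildeEta_le_tildeEta_succ_iff (hk : 1 ≤ k) (hkK : k < K) :
    tildeEta σ2 a k ≤ tildeEta σ2 a (k + 1) ↔ tildeEta σ2 a k ≤ a (k + 1) ^ 2 := by
  obtain ⟨hx, hm, hy⟩ := hs.mediant_nonneg hk hkK
  rw [tildeEta, tildeEta, sq_le_sq₀ hx hm, sq_le_sq₀ hx hy, ← sub_nonneg,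
    ← sub_nonneg (a := a _)]
  exact (sign_iff_of_mul_eq_mul (hs.ampSum_pos (by omega) hkK) (hs.pos (k + 1) (by omega) hkK)
    (hs.optRatio_succ_sub_mul hk hkK)).1

theorem tildeEta_succ_le_tildeEta_iff (hk : 1 ≤ k) (hkK : k < K) :
    tildeEta σ2 a (k + 1) ≤ tildeEta σ2 a k ↔ a (k + 1) ^ 2 ≤ tildeEta σ2 a k := by
  obtain ⟨hx, hm, hy⟩ := hs.mediant_nonneg hk hkK
  rw [tildeEta, tildeEta, sq_le_sq₀ hm hx, sq_le_sq₀ hy hx, ← sub_nonpos,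
    ← sub_nonpos (a := a _)]
  exact (sign_iff_of_mul_eq_mul (hs.ampSum_pos (by omega) hkK) (hs.pos (k + 1) (by omega) hkK)
    (hs.optRatio_succ_sub_mul hk hkK)).2

theorem tildeEta_succ_le_sq_iff (hk : 1 ≤ k) (hkK : k < K) :
    tildeEta σ2 a (k + 1) ≤ a (k + 1) ^ 2 ↔ tildeEta σ2 a k ≤ a (k + 1) ^ 2 := by
  obtain ⟨hx, hm, hy⟩ := hs.mediant_nonneg hk hkK
  rw [tildeEta, tildeEta, sq_le_sq₀ hm hy, sq_le_sq₀ hx hy, ← sub_nonneg,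
    ← sub_nonneg (a := a _)]
  exact (sign_iff_of_mul_eq_mul (hs.ampSum_pos (by omega) hkK) (hs.ampSum_pos hk hkK.le)
    (hs.sub_optRatio_succ_mul hk hkK)).1

theorem sq_le_tildeEta_succ_iff (hk : 1 ≤ k) (hkK : k < K) :
    a (k + 1) ^ 2 ≤ tildeEta σ2 a (k + 1) ↔ a (k + 1) ^ 2 ≤ tildeEta σ2 a k := by
  obtain ⟨hx, hm, hy⟩ := hs.mediant_nonneg hk hkK
  rw [tildeEta, tildeEta, sq_le_sq₀ hy hm, sq_le_sq₀ hy hx, ← sub_nonpos,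
    ← sub_nonpos (a := a _)]
  exact (sign_iff_of_mul_eq_mul (hs.ampSum_pos (by omega) hkK) (hs.ampSum_pos hk hkK.le)
    (hs.sub_optRatio_succ_mul hk hkK)).2

theorem sq_le_clampedEta (hk : 1 ≤ k) : a k ^ 2 ≤ clampedEta σ2 a K k := by
  have := hs.sq_le_sq_succ k hk
  grind [clampedEta]

theorem clampedEta_eq_sq_of_lt (hk : 1 ≤ k) (h : tildeEta σ2 a k < clampedEta σ2 a K k) :
    clampedEta σ2 a K k = a k ^ 2 := by
  have := hs.sq_le_sq_succ k hk
  grind [clampedEta]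

theorem mse_strictMonoOn (hk : 1 ≤ k) (hkK : k ≤ K) :
    StrictMonoOn (mse σ2 a k) (Set.Ici (tildeEta σ2 a k)) :=
  AirComp.mse_strictMonoOn (powerSum_pos hs.noise_pos) (hs.optRatio_pos hk hkK)

theorem mse_strictAntiOn (hk : 1 ≤ k) (hkK : k ≤ K) :
    StrictAntiOn (mse σ2 a k) (Set.Ioc 0 (tildeEta σ2 a k)) :=
  AirComp.mse_strictAntiOn (powerSum_pos hs.noise_pos) (hs.optRatio_pos hk hkK)

theorem exists_mse_lt_of_tildeEta_lt_sq (hk : 1 ≤ k) (hkK : k ≤ K)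
    (h : tildeEta σ2 a k < a k ^ 2) :
    ∃ j, 1 ≤ j ∧ j < k ∧
      mse σ2 a j (clampedEta σ2 a K j) < mse σ2 a k (clampedEta σ2 a K k) := by
  induction k, hk using Nat.le_induction with
  | base => exact absurd h (sq_lt_tildeEta_one hs.noise_pos (hs.pos 1 le_rfl hkK)).not_gt
  | succ m hm ih =>
    have hmK : m < K := hkK
    have hlt : tildeEta σ2 a m < a (m + 1) ^ 2 := by
      contrapose! h
      exact (hs.sq_le_tildeEta_succ_iff hm hmK).2 h
    have hcl : clampedEta σ2 a K (m + 1) = a (m + 1) ^ 2 :=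
      hs.clampedEta_eq_sq_of_lt (by omega) (h.trans_le (hs.sq_le_clampedEta (by omega)))
    rw [hcl, mse_succ_sq (hs.pos (m + 1) (by omega) hkK)]
    rcases (clampedEta_le_sq_succ hmK).lt_or_eq with hlt' | heq
    · exact ⟨m, hm, by omega, hs.mse_strictMonoOn hm hmK.le
        (tildeEta_le_clampedEta fun _ => hlt.le) (Set.mem_Ici.2 hlt.le) hlt'⟩
    · -- tie: the clamp of `m` also sits at `a (m + 1) ^ 2 = a m ^ 2`, so descend to `m`
      have hclm : clampedEta σ2 a K m = a m ^ 2 := hs.clampedEta_eq_sq_of_lt hm (heq ▸ hlt)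
      obtain ⟨j, hj1, hjm, hj⟩ := ih hmK.le (hclm ▸ heq ▸ hlt)
      exact ⟨j, hj1, by omega, heq ▸ hj⟩

theorem exists_mse_lt_of_sq_succ_lt_tildeEta {k : ℕ} (hk : 1 ≤ k) (hkK : k < K)
    (h : a (k + 1) ^ 2 < tildeEta σ2 a k) :
    ∃ j, k < j ∧ j ≤ K ∧
      mse σ2 a j (clampedEta σ2 a K j) < mse σ2 a k (clampedEta σ2 a K k) := by
  have hcl : clampedEta σ2 a K k = a (k + 1) ^ 2 :=
    (lt_and_clampedEta_eq_of_clampedEta_lt ((clampedEta_le_sq_succ hkK).trans_lt h)).2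
  have hlt : a (k + 1) ^ 2 < tildeEta σ2 a (k + 1) := by
    contrapose! h
    exact (hs.tildeEta_succ_le_sq_iff hk hkK).1 h
  have hpos : 0 < a (k + 1) ^ 2 := pow_pos (hs.pos (k + 1) (by omega) hkK) 2
  rw [hcl, ← mse_succ_sq (hs.pos (k + 1) (by omega) hkK)]
  rcases (hs.sq_le_clampedEta (k := k + 1) (by omega)).lt_or_eq with hlt' | heq
  · exact ⟨k + 1, by omega, hkK, hs.mse_strictAntiOn (by omega) hkK ⟨hpos, hlt.le⟩
      ⟨hpos.trans hlt', clampedEta_le_tildeEta hlt.le⟩ hlt'⟩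
  · -- tie: the clamp of `k + 1` also sits at `a (k + 1) ^ 2 = a (k + 2) ^ 2`, so ascend
    obtain ⟨hk1K, hcl'⟩ := lt_and_clampedEta_eq_of_clampedEta_lt (heq ▸ hlt)
    obtain ⟨j, hkj, hjK, hj⟩ :=
      exists_mse_lt_of_sq_succ_lt_tildeEta (by omega) hk1K (hcl' ▸ heq ▸ hlt)
    exact ⟨j, by omega, hjK, heq ▸ hj⟩
termination_by K - k

theorem sq_le_tildeEta_of_isMinOn (hk : 1 ≤ k) (hkK : k ≤ K)
    (hmin : IsMinOn (fun j => mse σ2 a j (clampedEta σ2 a K j)) (Set.Icc 1 K) k) :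
    a k ^ 2 ≤ tildeEta σ2 a k := by
  by_contra! h
  obtain ⟨j, hj1, hjk, hj⟩ := hs.exists_mse_lt_of_tildeEta_lt_sq hk hkK h
  exact hj.not_ge (hmin ⟨hj1, by omega⟩)

theorem tildeEta_le_sq_succ_of_isMinOn (hk : 1 ≤ k) (hkK : k < K)
    (hmin : IsMinOn (fun j => mse σ2 a j (clampedEta σ2 a K j)) (Set.Icc 1 K) k) :
    tildeEta σ2 a k ≤ a (k + 1) ^ 2 := by
  by_contra! h
  obtain ⟨j, hkj, hjK, hj⟩ := hs.exists_mse_lt_of_sq_succ_lt_tildeEta hk hkK h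
  exact hj.not_ge (hmin ⟨by omega, hjK⟩)

theorem sq_le_tildeEta_of_le {m : ℕ} (hk : 1 ≤ k) (hkm : k ≤ m) (hmK : m ≤ K)
    (h : a m ^ 2 ≤ tildeEta σ2 a m) : a k ^ 2 ≤ tildeEta σ2 a k := by
  induction m, hkm using Nat.le_induction with
  | base => exact h
  | succ m hkm ih =>
    have hm : 1 ≤ m := hk.trans hkm
    exact ih (by omega)
      ((hs.sq_le_sq_succ m hm hmK).trans ((hs.sq_le_tildeEta_succ_iff hm hmK).1 h))

theorem tildeEta_le_sq_succ_of_le {m : ℕ} (hm : 1 ≤ m) (hmk : m ≤ k) (hkK : k < K)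
    (h : tildeEta σ2 a m ≤ a (m + 1) ^ 2) : tildeEta σ2 a k ≤ a (k + 1) ^ 2 := by
  induction k, hmk using Nat.le_induction with
  | base => exact h
  | succ k hmk ih =>
    exact ((hs.tildeEta_succ_le_sq_iff (hm.trans hmk) (by omega)).2 (ih (by omega))).trans
      (hs.sq_le_sq_succ (k + 1) (by omega) hkK)

theorem antitoneOn_tildeEta {m : ℕ} (hmK : m ≤ K) (h : a m ^ 2 ≤ tildeEta σ2 a m) :
    AntitoneOn (tildeEta σ2 a) (Set.Icc 1 m) := by
  refine antitoneOn_of_succ_le Set.ordConnected_Icc fun k _ hk hk1 => ?_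
  simp only [Order.succ_eq_add_one, Set.mem_Icc] at hk hk1 ⊢
  rw [hs.tildeEta_succ_le_tildeEta_iff hk.1 (by omega),
    ← hs.sq_le_tildeEta_succ_iff hk.1 (by omega)]
  exact hs.sq_le_tildeEta_of_le (by omega) hk1.2 hmK h

theorem monotoneOn_tildeEta {m : ℕ} (hm : 1 ≤ m)
    (h : m < K → tildeEta σ2 a m ≤ a (m + 1) ^ 2) :
    MonotoneOn (tildeEta σ2 a) (Set.Icc m K) := by
  refine monotoneOn_of_le_succ Set.ordConnected_Icc fun k _ hk hk1 => ?_
  simp only [Order.succ_eq_add_one, Set.mem_Icc] at hk hk1 ⊢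
  rw [hs.tildeEta_le_tildeEta_succ_iff (hm.trans hk.1) (by omega)]
  exact hs.tildeEta_le_sq_succ_of_le hm hk.1 (by omega) (h (by omega))

end Setup

theorem sqrt_mul_sq {p x : ℝ} (hp : 0 ≤ p) : (√p * x) ^ 2 = p * x ^ 2 := by
  rw [mul_pow, sq_sqrt hp]

theorem Setup.of_sqrt_mul {σ2 : ℝ} {P h : ℕ → ℝ} {K : ℕ} (hσ2 : 0 < σ2)
    (hP : ∀ k, 1 ≤ k → k ≤ K → 0 < P k) (hh : ∀ k, 1 ≤ k → k ≤ K → 0 < h k)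
    (hord : ∀ k, 1 ≤ k → k < K → P k * h k ^ 2 ≤ P (k + 1) * h (k + 1) ^ 2) :
    Setup σ2 (fun i => √(P i) * h i) K where
  noise_pos := hσ2
  pos i hi hiK := mul_pos (sqrt_pos.2 (hP i hi hiK)) (hh i hi hiK)
  sq_le_sq_succ k hk hkK := by
    simp only [sqrt_mul_sq (hP k hk hkK.le).le, sqrt_mul_sq (hP (k + 1) (by omega) hkK).le]
    exact hord k hk hkK

theorem tildeEta_sqrt_mul {σ2 : ℝ} {P h : ℕ → ℝ} {k : ℕ}
    (hP : ∀ i, 1 ≤ i → i ≤ k → 0 ≤ P i) :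
    tildeEta σ2 (fun i => √(P i) * h i) k =
      ((σ2 + ∑ i ∈ Icc 1 k, P i * h i ^ 2) / ∑ i ∈ Icc 1 k, √(P i) * h i) ^ 2 := by
  rw [tildeEta, optRatio, powerSum, ampSum,
    sum_congr rfl fun i hi => sqrt_mul_sq (hP i (mem_Icc.1 hi).1 (mem_Icc.1 hi).2)]

end AirComp

open AirComp in
theorem stmt4_general
    (K : ℕ) (P h : ℕ → ℝ) (σ2 : ℝ)
    (hP : ∀ k, 1 ≤ k → k ≤ K → 0 < P k)
    (hh : ∀ k, 1 ≤ k → k ≤ K → 0 < h k)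
    (hσ2 : 0 < σ2)
    (hord : ∀ k, 1 ≤ k → k < K → P k * (h k) ^ 2 ≤ P (k + 1) * (h (k + 1)) ^ 2)
    (S ηt : ℕ → ℝ) (F : ℕ → ℝ → ℝ)
    (hS : ∀ k, S k = ∑ i ∈ Finset.Icc 1 k, Real.sqrt (P i) * h i)
    (hηt : ∀ k, ηt k = ((σ2 + ∑ i ∈ Finset.Icc 1 k, P i * (h i) ^ 2) / S k) ^ 2)
    (hF : ∀ k η, F k η =
      (∑ i ∈ Finset.Icc 1 k, (Real.sqrt (P i) * h i / Real.sqrt η - 1) ^ 2) + σ2 / η)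
    (ηcl : ℕ → ℝ)
    (hηcl : ∀ k, 1 ≤ k → k < K →
      ηcl k = min (P (k + 1) * (h (k + 1)) ^ 2) (max (ηt k) (P k * (h k) ^ 2)))
    (hηclK : ηcl K = max (ηt K) (P K * (h K) ^ 2))
    (kstar : ℕ) (hk1 : 1 ≤ kstar) (hk2 : kstar ≤ K)
    (hkmin : ∀ j, 1 ≤ j → j ≤ K → F kstar (ηcl kstar) ≤ F j (ηcl j)) :
    -- (1)
    (P kstar * (h kstar) ^ 2 ≤ ηt kstar ∧
      (kstar < K → ηt kstar ≤ P (kstar + 1) * (h (kstar + 1)) ^ 2)) ∧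
    -- (2)
    ((∀ k, 2 ≤ k → k ≤ kstar → P k * (h k) ^ 2 ≤ ηt (k - 1)) ∧
     (∀ k, 2 ≤ k → kstar + 1 ≤ k → k ≤ K → ηt (k - 1) ≤ P k * (h k) ^ 2)) ∧
    -- (3)
    (∀ j, 1 ≤ j → j ≤ K → ηt kstar ≤ ηt j) := by
  have hs := Setup.of_sqrt_mul hσ2 hP hh hord
  set a : ℕ → ℝ := fun i => √(P i) * h i
  have hsq : ∀ k, 1 ≤ k → k ≤ K → P k * h k ^ 2 = a k ^ 2 :=
    fun k hk hkK => (sqrt_mul_sq (hP k hk hkK).le).symm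
  have hηt' : ∀ k, k ≤ K → ηt k = tildeEta σ2 a k := fun k hkK => by
    rw [hηt, hS, tildeEta_sqrt_mul fun i hi hik => (hP i hi (hik.trans hkK)).le]
  have hcl : ∀ j, 1 ≤ j → j ≤ K → ηcl j = clampedEta σ2 a K j := by
    intro j hj hjK
    obtain hjK | rfl := hjK.lt_or_eq
    · rw [hηcl j hj hjK, clampedEta, if_pos hjK, hsq j hj hjK.le, hsq (j + 1) (by omega) hjK,
        hηt' j hjK.le]
    · rw [hηclK, clampedEta, if_neg (lt_irrefl _), hsq _ hj le_rfl, hηt' _ le_rfl]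
  have hF' : F = mse σ2 a := funext fun k => funext fun η => hF k η
  have hmin : IsMinOn (fun j => mse σ2 a j (clampedEta σ2 a K j)) (Set.Icc 1 K) kstar :=
    isMinOn_iff.2 fun j ⟨hj, hjK⟩ => by
      simpa only [hF', hcl kstar hk1 hk2, hcl j hj hjK] using hkmin j hj hjK
  have h1a := hs.sq_le_tildeEta_of_isMinOn hk1 hk2 hmin
  have h1b := fun hK' => hs.tildeEta_le_sq_succ_of_isMinOn hk1 hK' hmin
  refine ⟨⟨?_, fun hK' => ?_⟩, ⟨fun k hk hkk => ?_, fun k hk hkk hkK => ?_⟩, fun j hj hjK => ?_⟩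
  · rwa [hsq _ hk1 hk2, hηt' _ hk2]
  · rw [hsq _ (by omega) hK', hηt' _ hk2]; exact h1b hK'
  · obtain ⟨n, rfl⟩ : ∃ n, k = n + 1 := ⟨k - 1, by omega⟩
    rw [hsq _ (by omega) (by omega), hηt' _ (by omega), Nat.add_sub_cancel,
      ← hs.sq_le_tildeEta_succ_iff (by omega) (by omega)]
    exact hs.sq_le_tildeEta_of_le (by omega) hkk hk2 h1a
  · obtain ⟨n, rfl⟩ : ∃ n, k = n + 1 := ⟨k - 1, by omega⟩
    rw [hsq _ (by omega) hkK, hηt' _ (by omega), Nat.add_sub_cancel]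
    exact hs.tildeEta_le_sq_succ_of_le hk1 (by omega) hkK (h1b (by omega))
  · rw [hηt' _ hk2, hηt' _ hjK]
    rcases le_total j kstar with hjk | hkj
    · exact hs.antitoneOn_tildeEta hk2 h1a ⟨hj, hjk⟩ ⟨hk1, le_rfl⟩ hjk
    · exact hs.monotoneOn_tildeEta hk1 h1b ⟨le_rfl, hk2⟩ ⟨hkj, hjK⟩ hkj

/-- **Lemma 3.** Properties of the index `k*`:
(1) `P̄_{k*}|h_{k*}|² ≤ η̃_{k*}`, and if `k* < K` also `η̃_{k*} ≤ P̄_{k*+1}|h_{k*+1}|²`;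
(2) `P̄_k|h_k|² ≤ η̃_{k−1}` for `2 ≤ k ≤ k*`, and `P̄_k|h_k|² ≥ η̃_{k−1}` for
`k*+1 ≤ k ≤ K` with `k ≥ 2`;
(3) `η̃_{k*} ≤ η̃_j` for every `1 ≤ j ≤ K`. -/
theorem stmt4
    (K : ℕ) (hK : 1 ≤ K) (P h : ℕ → ℝ) (σ2 : ℝ)
    (hP : ∀ k, 1 ≤ k → k ≤ K → 0 < P k)
    (hh : ∀ k, 1 ≤ k → k ≤ K → 0 < h k)
    (hσ2 : 0 < σ2)
    (hord : ∀ k, 1 ≤ k → k < K → P k * (h k) ^ 2 ≤ P (k + 1) * (h (k + 1)) ^ 2)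
    (S ηt : ℕ → ℝ) (F : ℕ → ℝ → ℝ)
    (hS : ∀ k, S k = ∑ i ∈ Finset.Icc 1 k, Real.sqrt (P i) * h i)
    (hηt : ∀ k, ηt k = ((σ2 + ∑ i ∈ Finset.Icc 1 k, P i * (h i) ^ 2) / S k) ^ 2)
    (hF : ∀ k η, F k η =
      (∑ i ∈ Finset.Icc 1 k, (Real.sqrt (P i) * h i / Real.sqrt η - 1) ^ 2) + σ2 / η)
    (ηcl : ℕ → ℝ)
    (hηcl : ∀ k, 1 ≤ k → k < K →
      ηcl k = min (P (k + 1) * (h (k + 1)) ^ 2) (max (ηt k) (P k * (h k) ^ 2)))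
    (hηclK : ηcl K = max (ηt K) (P K * (h K) ^ 2))
    (kstar : ℕ) (hk1 : 1 ≤ kstar) (hk2 : kstar ≤ K)
    (hkmin : ∀ j, 1 ≤ j → j ≤ K → F kstar (ηcl kstar) ≤ F j (ηcl j)) :
    -- (1)
    (P kstar * (h kstar) ^ 2 ≤ ηt kstar ∧
      (kstar < K → ηt kstar ≤ P (kstar + 1) * (h (kstar + 1)) ^ 2)) ∧
    -- (2)
    ((∀ k, 2 ≤ k → k ≤ kstar → P k * (h k) ^ 2 ≤ ηt (k - 1)) ∧
     (∀ k, 2 ≤ k → kstar + 1 ≤ k → k ≤ K → ηt (k - 1) ≤ P k * (h k) ^ 2)) ∧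
    -- (3)
    (∀ j, 1 ≤ j → j ≤ K → ηt kstar ≤ ηt j) :=
  stmt4_general K P h σ2 hP hh hσ2 hord S ηt F hS hηt hF ηcl hηcl hηclK kstar hk1 hk2 hkmin
end

section
/- For every 2 ≤ k ≤ K: P̄_k|h_k|² ≤ η̃_k if and only if P̄_k|h_k|² ≤ η̃_{k−1}; and P̄_k|h_k|² ≥ η̃_k if and only if P̄_k|h_k|² ≥ η̃_{k−1}. (Lemma 4) -/
/-!
With `a = √P̄_k |h_k|`, `A = σ² + ∑_{i<k} P̄_i|h_i|²` and `B = S_{k-1}` we have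
`√η̃_{k-1} = A / B` and `√η̃_k = (A + a·a) / (B + a)`, the mediant of `A / B` and `a / 1`.
A mediant lies between its two fractions, so `a` sits on the same side of `√η̃_k` as of `√η̃_{k-1}`.
-/

theorem le_add_mul_div_add_iff {A B b x : ℝ} (hB : 0 < B) (hb : 0 < b) :
    x ≤ (A + x * b) / (B + b) ↔ x ≤ A / B := by
  rw [le_div_iff₀ (add_pos hB hb), le_div_iff₀ hB, mul_add]
  constructor <;> intro <;> linarith

theorem add_mul_div_add_le_iff {A B b x : ℝ} (hB : 0 < B) (hb : 0 < b) :
    (A + x * b) / (B + b) ≤ x ↔ A / B ≤ x := by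
  rw [div_le_iff₀ (add_pos hB hb), div_le_iff₀ hB, mul_add]
  constructor <;> intro <;> linarith

theorem sq_le_sq_mediant_iff {A B a : ℝ} (hA : 0 ≤ A) (hB : 0 < B) (ha : 0 < a) :
    a ^ 2 ≤ ((A + a ^ 2) / (B + a)) ^ 2 ↔ a ^ 2 ≤ (A / B) ^ 2 := by
  rw [sq_le_sq₀ ha.le (by positivity), sq_le_sq₀ ha.le (by positivity), sq a,
    le_add_mul_div_add_iff hB ha]

theorem sq_mediant_le_sq_iff {A B a : ℝ} (hA : 0 ≤ A) (hB : 0 < B) (ha : 0 < a) :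
    ((A + a ^ 2) / (B + a)) ^ 2 ≤ a ^ 2 ↔ (A / B) ^ 2 ≤ a ^ 2 := by
  rw [sq_le_sq₀ (by positivity) ha.le, sq_le_sq₀ (by positivity) ha.le, sq a,
    add_mul_div_add_le_iff hB ha]

theorem stmt5_general
    (K : ℕ) (P h : ℕ → ℝ) (σ2 : ℝ)
    (hP : ∀ k, 1 ≤ k → k ≤ K → 0 < P k)
    (hh : ∀ k, 1 ≤ k → k ≤ K → 0 < h k)
    (hσ2 : 0 < σ2)
    (S ηt : ℕ → ℝ)
    (hS : ∀ k, S k = ∑ i ∈ Finset.Icc 1 k, Real.sqrt (P i) * h i)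
    (hηt : ∀ k, ηt k = ((σ2 + ∑ i ∈ Finset.Icc 1 k, P i * (h i) ^ 2) / S k) ^ 2) :
    ∀ k, 2 ≤ k → k ≤ K →
      ((P k * (h k) ^ 2 ≤ ηt k ↔ P k * (h k) ^ 2 ≤ ηt (k - 1)) ∧
       (ηt k ≤ P k * (h k) ^ 2 ↔ ηt (k - 1) ≤ P k * (h k) ^ 2)) := by
  intro k hk2 hkK
  obtain ⟨m, rfl⟩ : ∃ m, k = m + 1 := ⟨k - 1, by omega⟩
  rw [Nat.add_sub_cancel]
  have hPk := hP (m + 1) (by omega) hkK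
  set a := Real.sqrt (P (m + 1)) * h (m + 1)
  set A := σ2 + ∑ i ∈ Finset.Icc 1 m, P i * h i ^ 2
  have ha : 0 < a := mul_pos (Real.sqrt_pos.2 hPk) (hh _ (by omega) hkK)
  have ha_sq : P (m + 1) * h (m + 1) ^ 2 = a ^ 2 := by
    rw [mul_pow, Real.sq_sqrt hPk.le]
  have hA : 0 ≤ A := add_nonneg hσ2.le <| Finset.sum_nonneg fun i hi => by
    have := Finset.mem_Icc.1 hi
    exact (mul_pos (hP i this.1 (by omega)) (pow_pos (hh i this.1 (by omega)) 2)).le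
  have hB : 0 < S m := by
    rw [hS]
    refine Finset.sum_pos (fun i hi => ?_) ⟨1, Finset.mem_Icc.2 ⟨le_rfl, by omega⟩⟩
    have := Finset.mem_Icc.1 hi
    exact mul_pos (Real.sqrt_pos.2 (hP i this.1 (by omega))) (hh i this.1 (by omega))
  have hηt_succ : ηt (m + 1) = ((A + a ^ 2) / (S m + a)) ^ 2 := by
    rw [hηt, hS, hS, Finset.sum_Icc_succ_top (by omega), Finset.sum_Icc_succ_top (by omega),
      ha_sq, add_assoc]
  have hηt_m : ηt m = (A / S m) ^ 2 := hηt m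
  rw [ha_sq, hηt_succ, hηt_m]
  exact ⟨sq_le_sq_mediant_iff hA hB ha, sq_mediant_le_sq_iff hA hB ha⟩

/-- **Lemma 4.** For every `2 ≤ k ≤ K`:
`P̄_k|h_k|² ≤ η̃_k ↔ P̄_k|h_k|² ≤ η̃_{k−1}` and
`P̄_k|h_k|² ≥ η̃_k ↔ P̄_k|h_k|² ≥ η̃_{k−1}`. -/
theorem stmt5
    (K : ℕ) (hK : 1 ≤ K) (P h : ℕ → ℝ) (σ2 : ℝ)
    (hP : ∀ k, 1 ≤ k → k ≤ K → 0 < P k)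
    (hh : ∀ k, 1 ≤ k → k ≤ K → 0 < h k)
    (hσ2 : 0 < σ2)
    (hord : ∀ k, 1 ≤ k → k < K → P k * (h k) ^ 2 ≤ P (k + 1) * (h (k + 1)) ^ 2)
    (S ηt : ℕ → ℝ)
    (hS : ∀ k, S k = ∑ i ∈ Finset.Icc 1 k, Real.sqrt (P i) * h i)
    (hηt : ∀ k, ηt k = ((σ2 + ∑ i ∈ Finset.Icc 1 k, P i * (h i) ^ 2) / S k) ^ 2) :
    ∀ k, 2 ≤ k → k ≤ K →
      ((P k * (h k) ^ 2 ≤ ηt k ↔ P k * (h k) ^ 2 ≤ ηt (k - 1)) ∧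
       (ηt k ≤ P k * (h k) ^ 2 ↔ ηt (k - 1) ≤ P k * (h k) ^ 2)) :=
  stmt5_general K P h σ2 hP hh hσ2 S ηt hS hηt
end

section
/- For every 1 ≤ k ≤ K one has the identity P̄_k|h_k|² − η̃_k = (√(P̄_k)|h_k| + √(η̃_k)) · J(k)/S_k; equivalently, √(P̄_k)|h_k| − √(η̃_k) = J(k)/S_k. In particular, P̄_k|h_k|² − η̃_k and J(k) have the same sign. (identity (43) in the proof of Lemma 4) -/
/-!
Write `x i = √(P̄ i) |h i|`, so that `S k = ∑_{i ≤ k} x i` and `η̃ k = (A / S k)²` with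
`A = σ² + ∑_{i ≤ k} x i²`. The `k`-th summand of `J k` vanishes, so `J k` is unchanged when that
summand is added, and then `J k = x k · S k − A`. Hence `x k − √(η̃ k) = x k − A / S k = J k / S k`,
and the first identity is the difference of squares `x k² − (A / S k)²`.
-/

open Finset

lemma Finset.sum_Icc_eq_sum_Icc_sub_one_add {M : Type*} [AddCommMonoid M] {a b : ℕ} (hab : a ≤ b)
    (hb : 0 < b) (f : ℕ → M) : ∑ i ∈ Icc a b, f i = ∑ i ∈ Icc a (b - 1), f i + f b := by
  rw [← insert_Icc_sub_one_right_eq_Icc hab, sum_insert (by simp [hb]), add_comm]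

lemma Finset.sum_mul_sub_eq_mul_sum_sub_sum_sq {R : Type*} [CommRing R] {ι : Type*} (s : Finset ι)
    (x : ι → R) (a : R) : ∑ i ∈ s, x i * (a - x i) = a * ∑ i ∈ s, x i - ∑ i ∈ s, x i ^ 2 := by
  simp only [mul_sub, sum_sub_distrib, mul_sum, sq, mul_comm]

lemma sq_sub_sq_div_of_eq_mul_sub {a S A J : ℝ} (ha : 0 < a) (hS : 0 < S) (hA : 0 ≤ A)
    (hJ : J = a * S - A) :
    a ^ 2 - (A / S) ^ 2 = (a + √((A / S) ^ 2)) * (J / S) ∧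
      a - √((A / S) ^ 2) = J / S ∧ (0 ≤ a ^ 2 - (A / S) ^ 2 ↔ 0 ≤ J) := by
  have hsqrt : √((A / S) ^ 2) = A / S := Real.sqrt_sq (by positivity)
  have hgap : a - A / S = J / S := by rw [hJ, sub_div' hS.ne']
  have hfactor : a ^ 2 - (A / S) ^ 2 = (a + A / S) * (J / S) := by rw [sq_sub_sq, hgap]
  refine ⟨by rw [hsqrt, hfactor], by rw [hsqrt, hgap], ?_⟩
  rw [hfactor, mul_nonneg_iff_of_pos_left (by positivity), le_div_iff₀ hS, zero_mul]

theorem stmt6_general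
    (K : ℕ) (P h : ℕ → ℝ) (σ2 : ℝ)
    (hP : ∀ k, 1 ≤ k → k ≤ K → 0 < P k)
    (hh : ∀ k, 1 ≤ k → k ≤ K → 0 < h k)
    (hσ2 : 0 < σ2)
    (S ηt J : ℕ → ℝ)
    (hS : ∀ k, S k = ∑ i ∈ Finset.Icc 1 k, Real.sqrt (P i) * h i)
    (hηt : ∀ k, ηt k = ((σ2 + ∑ i ∈ Finset.Icc 1 k, P i * (h i) ^ 2) / S k) ^ 2)
    (hJ : ∀ k, J k = (∑ i ∈ Finset.Icc 1 (k - 1),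
      Real.sqrt (P i) * h i * (Real.sqrt (P k) * h k - Real.sqrt (P i) * h i)) - σ2) :
    ∀ k, 1 ≤ k → k ≤ K →
      (P k * (h k) ^ 2 - ηt k
          = (Real.sqrt (P k) * h k + Real.sqrt (ηt k)) * (J k / S k)) ∧
      (Real.sqrt (P k) * h k - Real.sqrt (ηt k) = J k / S k) ∧
      (0 ≤ P k * (h k) ^ 2 - ηt k ↔ 0 ≤ J k) := by
  intro k hk hkK
  set x : ℕ → ℝ := fun i ↦ √(P i) * h i with hx
  have hxpos : ∀ i ∈ Icc 1 k, 0 < x i := fun i hi ↦ by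
    obtain ⟨hi1, hik⟩ := mem_Icc.mp hi
    exact mul_pos (Real.sqrt_pos.mpr (hP i hi1 (hik.trans hkK))) (hh i hi1 (hik.trans hkK))
  have hxsq : ∀ i ∈ Icc 1 k, P i * h i ^ 2 = x i ^ 2 := fun i hi ↦ by
    rw [hx, mul_pow, Real.sq_sqrt (hP i (mem_Icc.mp hi).1 ((mem_Icc.mp hi).2.trans hkK)).le]
  have hSpos : 0 < S k := hS k ▸ sum_pos hxpos (nonempty_Icc.mpr hk)
  set A := σ2 + ∑ i ∈ Icc 1 k, x i ^ 2
  have hη : ηt k = (A / S k) ^ 2 := by rw [hηt, sum_congr rfl hxsq]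
  have hsplit : ∑ i ∈ Icc 1 k, x i * (x k - x i) = ∑ i ∈ Icc 1 (k - 1), x i * (x k - x i) := by
    rw [sum_Icc_eq_sum_Icc_sub_one_add hk hk, sub_self, mul_zero, add_zero]
  have hJk : J k = x k * S k - A := by
    rw [show J k = ∑ i ∈ Icc 1 (k - 1), x i * (x k - x i) - σ2 from hJ k, ← hsplit,
      sum_mul_sub_eq_mul_sum_sub_sum_sq, hS]
    ring
  rw [hη, hxsq k (right_mem_Icc.mpr hk)]
  exact sq_sub_sq_div_of_eq_mul_sub (hxpos k (right_mem_Icc.mpr hk)) hSpos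
    (by positivity) hJk

/-- **identity (43) in the proof of Lemma 4.** For every `1 ≤ k ≤ K`:
`P̄_k|h_k|² − η̃_k = (√(P̄_k)|h_k| + √(η̃_k)) · J(k)/S_k`, equivalently
`√(P̄_k)|h_k| − √(η̃_k) = J(k)/S_k`; in particular `P̄_k|h_k|² − η̃_k` and `J(k)`
have the same sign. -/
theorem stmt6
    (K : ℕ) (hK : 1 ≤ K) (P h : ℕ → ℝ) (σ2 : ℝ)
    (hP : ∀ k, 1 ≤ k → k ≤ K → 0 < P k)
    (hh : ∀ k, 1 ≤ k → k ≤ K → 0 < h k)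
    (hσ2 : 0 < σ2)
    (hord : ∀ k, 1 ≤ k → k < K → P k * (h k) ^ 2 ≤ P (k + 1) * (h (k + 1)) ^ 2)
    (S ηt J : ℕ → ℝ)
    (hS : ∀ k, S k = ∑ i ∈ Finset.Icc 1 k, Real.sqrt (P i) * h i)
    (hηt : ∀ k, ηt k = ((σ2 + ∑ i ∈ Finset.Icc 1 k, P i * (h i) ^ 2) / S k) ^ 2)
    (hJ : ∀ k, J k = (∑ i ∈ Finset.Icc 1 (k - 1),
      Real.sqrt (P i) * h i * (Real.sqrt (P k) * h k - Real.sqrt (P i) * h i)) - σ2) :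
    ∀ k, 1 ≤ k → k ≤ K →
      (P k * (h k) ^ 2 - ηt k
          = (Real.sqrt (P k) * h k + Real.sqrt (ηt k)) * (J k / S k)) ∧
      (Real.sqrt (P k) * h k - Real.sqrt (ηt k) = J k / S k) ∧
      (0 ≤ P k * (h k) ^ 2 - ηt k ↔ 0 ≤ J k) :=
  stmt6_general K P h σ2 hP hh hσ2 S ηt J hS hηt hJ
end

section
/- For every 2 ≤ k ≤ K one has the identity η̃_k − η̃_{k−1} = (√(η̃_k) + √(η̃_{k−1})) · √(P̄_k)|h_k| · J(k)/(S_k · S_{k−1}). In particular, η̃_k − η̃_{k−1} and J(k) have the same sign. (identity (51) in the proof of Lemma 3) -/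
/-!
Write `a i = √(P̄ i)|h i|`, so that `P̄ i |h i|² = a i²`, `√η̃_k = (σ² + ∑ a i²) / S_k` and
`J(k) = a_k S_{k-1} - (σ² + ∑_{i<k} a i²)`. Passing from `k - 1` to `k` adds `a_k` to the
denominator `S` and `a_k²` to the numerator `N`, and
`(N + a_k²)/(S + a_k) - N/S = a_k (a_k S - N) / (S (S + a_k))`; the identity is this
difference multiplied by the sum `√η̃_k + √η̃_{k-1}`, and that factor is positive.
-/

open Finset

lemma sq_div_add_sub_sq_div {F : Type*} [Field F] {N S B : F} (hS : S ≠ 0) (hSB : S + B ≠ 0) :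
    ((N + B ^ 2) / (S + B)) ^ 2 - (N / S) ^ 2
      = ((N + B ^ 2) / (S + B) + N / S) * B * ((B * S - N) / ((S + B) * S)) := by
  field_simp
  ring

lemma sum_mul_sub_sub_eq {ι R : Type*} [CommRing R] (s : Finset ι) (a : ι → R) (b c : R) :
    ∑ i ∈ s, a i * (b - a i) - c = b * ∑ i ∈ s, a i - (c + ∑ i ∈ s, a i ^ 2) := by
  simp only [mul_sub, sum_sub_distrib, mul_sum, sq, mul_comm (a _) b]
  ring

/-- Identity (51) for an arbitrary sequence `a`, with `c` in the role of `σ²`. -/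
lemma sq_ratio_succ_sub_sq_ratio {F : Type*} [Field F] (a : ℕ → F) (c : F) (m : ℕ)
    (hm : ∑ i ∈ Icc 1 m, a i ≠ 0) (hm' : ∑ i ∈ Icc 1 (m + 1), a i ≠ 0) :
    ((c + ∑ i ∈ Icc 1 (m + 1), a i ^ 2) / ∑ i ∈ Icc 1 (m + 1), a i) ^ 2
        - ((c + ∑ i ∈ Icc 1 m, a i ^ 2) / ∑ i ∈ Icc 1 m, a i) ^ 2
      = ((c + ∑ i ∈ Icc 1 (m + 1), a i ^ 2) / ∑ i ∈ Icc 1 (m + 1), a i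
          + (c + ∑ i ∈ Icc 1 m, a i ^ 2) / ∑ i ∈ Icc 1 m, a i) * a (m + 1)
        * ((∑ i ∈ Icc 1 m, a i * (a (m + 1) - a i) - c)
          / ((∑ i ∈ Icc 1 (m + 1), a i) * ∑ i ∈ Icc 1 m, a i)) := by
  rw [sum_mul_sub_sub_eq]
  simp only [sum_Icc_succ_top (Nat.le_add_left 1 m), ← add_assoc] at hm' ⊢
  exact sq_div_add_sub_sq_div hm hm'

lemma nonneg_iff_of_eq_mul_div {F : Type*} [Field F] [LinearOrder F] [IsStrictOrderedRing F]
    {x c y d : F} (hx : x = c * (y / d)) (hc : 0 < c) (hd : 0 < d) : 0 ≤ x ↔ 0 ≤ y := by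
  rw [hx, mul_nonneg_iff_of_pos_left hc, le_div_iff₀ hd, zero_mul]

lemma sum_Icc_pos {a : ℕ → ℝ} {n : ℕ} (hn : 1 ≤ n) (ha : ∀ i, 1 ≤ i → i ≤ n → 0 < a i) :
    0 < ∑ i ∈ Icc 1 n, a i :=
  sum_pos (fun i hi => ha i (mem_Icc.1 hi).1 (mem_Icc.1 hi).2) ⟨1, mem_Icc.2 ⟨le_rfl, hn⟩⟩

lemma sum_mul_sq_eq_sum_sqrt_mul_sq {ι : Type*} {s : Finset ι} {P h : ι → ℝ}
    (hP : ∀ i ∈ s, 0 ≤ P i) : ∑ i ∈ s, P i * h i ^ 2 = ∑ i ∈ s, (Real.sqrt (P i) * h i) ^ 2 :=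
  sum_congr rfl fun i hi => by rw [mul_pow, Real.sq_sqrt (hP i hi)]

theorem stmt8_general
    (K : ℕ) (P h : ℕ → ℝ) (σ2 : ℝ)
    (hP : ∀ k, 1 ≤ k → k ≤ K → 0 < P k)
    (hh : ∀ k, 1 ≤ k → k ≤ K → 0 < h k)
    (hσ2 : 0 < σ2)
    (S ηt J : ℕ → ℝ)
    (hS : ∀ k, S k = ∑ i ∈ Finset.Icc 1 k, Real.sqrt (P i) * h i)
    (hηt : ∀ k, ηt k = ((σ2 + ∑ i ∈ Finset.Icc 1 k, P i * (h i) ^ 2) / S k) ^ 2)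
    (hJ : ∀ k, J k = (∑ i ∈ Finset.Icc 1 (k - 1),
      Real.sqrt (P i) * h i * (Real.sqrt (P k) * h k - Real.sqrt (P i) * h i)) - σ2) :
    ∀ k, 2 ≤ k → k ≤ K →
      (ηt k - ηt (k - 1)
        = (Real.sqrt (ηt k) + Real.sqrt (ηt (k - 1))) * (Real.sqrt (P k) * h k)
            * (J k / (S k * S (k - 1)))) ∧
      (0 ≤ ηt k - ηt (k - 1) ↔ 0 ≤ J k) := by
  intro k hk2 hkK
  obtain ⟨m, rfl⟩ : ∃ m, k = m + 1 := ⟨k - 1, by omega⟩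
  rw [Nat.add_sub_cancel]
  set a : ℕ → ℝ := fun i => Real.sqrt (P i) * h i
  have ha_pos : ∀ i, 1 ≤ i → i ≤ m + 1 → 0 < a i := fun i hi hiK =>
    mul_pos (Real.sqrt_pos.2 (hP i hi (by omega))) (hh i hi (by omega))
  have hSm : 0 < S m := hS m ▸ sum_Icc_pos (by omega) fun i hi him => ha_pos i hi (by omega)
  have hSm' : 0 < S (m + 1) := hS (m + 1) ▸ sum_Icc_pos le_add_self ha_pos
  have hη : ∀ j ≤ m + 1, ηt j = ((σ2 + ∑ i ∈ Icc 1 j, a i ^ 2) / S j) ^ 2 := fun j hj => by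
    rw [hηt, sum_mul_sq_eq_sum_sqrt_mul_sq fun i hi => (hP i (mem_Icc.1 hi).1 (by grind)).le]
  have hsqrt : ∀ j ≤ m + 1, 0 < S j →
      Real.sqrt (ηt j) = (σ2 + ∑ i ∈ Icc 1 j, a i ^ 2) / S j := fun j hj hSj => by
    rw [hη j hj, Real.sqrt_sq (by positivity)]
  have h51 : ηt (m + 1) - ηt m = (Real.sqrt (ηt (m + 1)) + Real.sqrt (ηt m)) * a (m + 1)
      * (J (m + 1) / (S (m + 1) * S m)) := by
    rw [hsqrt _ le_rfl hSm', hsqrt m (by omega) hSm, hη _ le_rfl, hη m (by omega), hJ,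
      Nat.add_sub_cancel, hS, hS]
    exact sq_ratio_succ_sub_sq_ratio a σ2 m (hS m ▸ hSm.ne') (hS (m + 1) ▸ hSm'.ne')
  refine ⟨h51, nonneg_iff_of_eq_mul_div h51 ?_ (mul_pos hSm' hSm)⟩
  have := ha_pos (m + 1) le_add_self le_rfl
  rw [hsqrt _ le_rfl hSm', hsqrt m (by omega) hSm]
  positivity

/-- **identity (51) in the proof of Lemma 3.** For every `2 ≤ k ≤ K`:
`η̃_k − η̃_{k−1} = (√(η̃_k) + √(η̃_{k−1})) · √(P̄_k)|h_k| · J(k)/(S_k · S_{k−1})`;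
in particular `η̃_k − η̃_{k−1}` and `J(k)` have the same sign. -/
theorem stmt8
    (K : ℕ) (hK : 1 ≤ K) (P h : ℕ → ℝ) (σ2 : ℝ)
    (hP : ∀ k, 1 ≤ k → k ≤ K → 0 < P k)
    (hh : ∀ k, 1 ≤ k → k ≤ K → 0 < h k)
    (hσ2 : 0 < σ2)
    (hord : ∀ k, 1 ≤ k → k < K → P k * (h k) ^ 2 ≤ P (k + 1) * (h (k + 1)) ^ 2)
    (S ηt J : ℕ → ℝ)
    (hS : ∀ k, S k = ∑ i ∈ Finset.Icc 1 k, Real.sqrt (P i) * h i)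
    (hηt : ∀ k, ηt k = ((σ2 + ∑ i ∈ Finset.Icc 1 k, P i * (h i) ^ 2) / S k) ^ 2)
    (hJ : ∀ k, J k = (∑ i ∈ Finset.Icc 1 (k - 1),
      Real.sqrt (P i) * h i * (Real.sqrt (P k) * h k - Real.sqrt (P i) * h i)) - σ2) :
    ∀ k, 2 ≤ k → k ≤ K →
      (ηt k - ηt (k - 1)
        = (Real.sqrt (ηt k) + Real.sqrt (ηt (k - 1))) * (Real.sqrt (P k) * h k)
            * (J k / (S k * S (k - 1)))) ∧
      (0 ≤ ηt k - ηt (k - 1) ↔ 0 ≤ J k) :=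
  stmt8_general K P h σ2 hP hh hσ2 S ηt J hS hηt hJ
end

section
/- Suppose σ² ≥ Σ_{i=1}^{K−1} √(P̄_i)|h_i|·(√(P̄_K)|h_K| − √(P̄_i)|h_i|), i.e., J(K) ≤ 0 (the low-SNR regime). Then full-power transmission p_k = P̄_k for all 1 ≤ k ≤ K, together with the denoising factor η = η̃_K, globally minimizes G over the feasible set {p : 0 ≤ p_k ≤ P̄_k} × (0, ∞). (low-SNR asymptotics, eq. (20)) -/
lemma pw11 (BK Bj Bk bj bk : ℝ) (h0j : 0 ≤ bj) (hj : bj ≤ Bj) (hjK : Bj ≤ BK)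
    (h0k : 0 ≤ bk) (hk : bk ≤ Bk) (hkK : Bk ≤ BK) :
    Bj * (bk * (Bk - bk)) + Bk * (bj * (Bj - bj)) ≤
      BK * (bj * (Bk - bk)) + BK * (bk * (Bj - bj)) := by
  have hdj : 0 ≤ Bj - bj := by linarith
  have hdk : 0 ≤ Bk - bk := by linarith
  have hBj0 : 0 ≤ Bj := le_trans h0j hj
  have hBk0 : 0 ≤ Bk := le_trans h0k hk
  rcases le_total Bj Bk with hc | hc
  · rcases eq_or_lt_of_le hBj0 with hz | hz
    · have hb : bj = 0 := le_antisymm (by linarith) h0j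
      subst hb; rw [← hz]; ring_nf
      nlinarith [mul_nonneg (mul_nonneg hBk0 h0k) hdk]
    · nlinarith [sq_nonneg (Bj*bk - Bk*bj),
        mul_nonneg (mul_nonneg (mul_nonneg hBk0 h0j) (sub_nonneg.2 hc)) hdj,
        mul_nonneg (mul_nonneg hBj0 (sub_nonneg.2 hkK))
          (add_nonneg (mul_nonneg h0j hdk) (mul_nonneg h0k hdj)), hz]
  · rcases eq_or_lt_of_le hBk0 with hz | hz
    · have hb : bk = 0 := le_antisymm (by linarith) h0k
      subst hb; rw [← hz]; ring_nf
      nlinarith [mul_nonneg (mul_nonneg hBj0 h0j) hdj]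
    · nlinarith [sq_nonneg (Bk*bj - Bj*bk),
        mul_nonneg (mul_nonneg (mul_nonneg hBj0 h0k) (sub_nonneg.2 hc)) hdk,
        mul_nonneg (mul_nonneg hBk0 (sub_nonneg.2 hjK))
          (add_nonneg (mul_nonneg h0k hdj) (mul_nonneg h0j hdk)), hz]

lemma auxL11 (I : Finset ℕ) (KK : ℕ) (B b : ℕ → ℝ)
    (hb0 : ∀ i ∈ I, 0 ≤ b i) (hbB : ∀ i ∈ I, b i ≤ B i) (hBK : ∀ i ∈ I, B i ≤ B KK) :
    (∑ i ∈ I, B i) * (∑ i ∈ I, b i * (B i - b i)) ≤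
      B KK * ((∑ i ∈ I, b i) * (∑ i ∈ I, (B i - b i))) := by
  have h1 : (∑ j ∈ I, B j) * (∑ k ∈ I, b k * (B k - b k)) =
      ∑ j ∈ I, ∑ k ∈ I, B j * (b k * (B k - b k)) := Finset.sum_mul_sum I I _ _
  have h2 : (∑ j ∈ I, b j) * (∑ k ∈ I, (B k - b k)) =
      ∑ j ∈ I, ∑ k ∈ I, b j * (B k - b k) := Finset.sum_mul_sum I I _ _
  have c1 : ∑ j ∈ I, ∑ k ∈ I, B j * (b k * (B k - b k)) =
      ∑ j ∈ I, ∑ k ∈ I, B k * (b j * (B j - b j)) := Finset.sum_comm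
  have c2 : ∑ j ∈ I, ∑ k ∈ I, (B KK) * (b j * (B k - b k)) =
      ∑ j ∈ I, ∑ k ∈ I, (B KK) * (b k * (B j - b j)) := Finset.sum_comm
  have h3 : B KK * ∑ j ∈ I, ∑ k ∈ I, b j * (B k - b k) =
      ∑ j ∈ I, ∑ k ∈ I, B KK * (b j * (B k - b k)) := by
    rw [Finset.mul_sum]
    exact Finset.sum_congr rfl fun j _ => Finset.mul_sum _ _ _
  have main : ∑ j ∈ I, ∑ k ∈ I, (B j * (b k * (B k - b k)) + B k * (b j * (B j - b j))) ≤
      ∑ j ∈ I, ∑ k ∈ I, (B KK * (b j * (B k - b k)) + B KK * (b k * (B j - b j))) :=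
    Finset.sum_le_sum fun j hj => Finset.sum_le_sum fun k hk =>
      pw11 (B KK) (B j) (B k) (b j) (b k) (hb0 j hj) (hbB j hj) (hBK j hj)
        (hb0 k hk) (hbB k hk) (hBK k hk)
  simp only [Finset.sum_add_distrib] at main
  rw [h1, h2, h3]
  linarith [main, c1, c2]

lemma auxC11 (I : Finset ℕ) (KK : ℕ) (B b : ℕ → ℝ)
    (hb0 : ∀ i ∈ I, 0 ≤ b i) (hbB : ∀ i ∈ I, b i ≤ B i) (hBK : ∀ i ∈ I, B i ≤ B KK) :
    (∑ i ∈ I, B i) * ((∑ i ∈ I, (B i)^2) - ∑ i ∈ I, (b i)^2) ≤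
      B KK * ((∑ i ∈ I, B i)^2 - (∑ i ∈ I, b i)^2) := by
  have SB0 : 0 ≤ ∑ i ∈ I, B i :=
    Finset.sum_nonneg fun i hi => le_trans (hb0 i hi) (hbB i hi)
  have step1 : (∑ i ∈ I, (B i)^2) - (∑ i ∈ I, (b i)^2) ≤
      B KK * ((∑ i ∈ I, B i) - (∑ i ∈ I, b i)) + ∑ i ∈ I, b i * (B i - b i) := by
    have per : ∀ i ∈ I, (B i)^2 - (b i)^2 ≤ B KK * (B i - b i) + b i * (B i - b i) := by
      intro i hi
      nlinarith [mul_nonneg (sub_nonneg.2 (hbB i hi)) (sub_nonneg.2 (hBK i hi))]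
    calc (∑ i ∈ I, (B i)^2) - (∑ i ∈ I, (b i)^2)
        = ∑ i ∈ I, ((B i)^2 - (b i)^2) := (Finset.sum_sub_distrib _ _).symm
      _ ≤ ∑ i ∈ I, (B KK * (B i - b i) + b i * (B i - b i)) := Finset.sum_le_sum per
      _ = B KK * ((∑ i ∈ I, B i) - (∑ i ∈ I, b i)) + ∑ i ∈ I, b i * (B i - b i) := by
          rw [Finset.sum_add_distrib, ← Finset.mul_sum, Finset.sum_sub_distrib]
  have L := auxL11 I KK B b hb0 hbB hBK
  have e1 : ∑ i ∈ I, (B i - b i) = (∑ i ∈ I, B i) - (∑ i ∈ I, b i) := Finset.sum_sub_distrib _ _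
  rw [e1] at L
  have m1 := mul_le_mul_of_nonneg_left step1 SB0
  nlinarith [m1, L]



/-- **low-SNR asymptotics, eq. (20).** If
`σ² ≥ ∑_{i=1}^{K−1} √(P̄_i)|h_i|·(√(P̄_K)|h_K| − √(P̄_i)|h_i|)` (i.e. `J(K) ≤ 0`),
then full-power transmission `p_k = P̄_k` together with `η = η̃_K` globally
minimizes `G` over the feasible set. -/
theorem stmt11
    (K : ℕ) (hK : 1 ≤ K) (P h : ℕ → ℝ) (σ2 : ℝ)
    (hP : ∀ k, 1 ≤ k → k ≤ K → 0 < P k)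
    (hh : ∀ k, 1 ≤ k → k ≤ K → 0 < h k)
    (hσ2 : 0 < σ2)
    (hord : ∀ k, 1 ≤ k → k < K → P k * (h k) ^ 2 ≤ P (k + 1) * (h (k + 1)) ^ 2)
    (S ηt : ℕ → ℝ) (G : (ℕ → ℝ) → ℝ → ℝ)
    (hS : ∀ k, S k = ∑ i ∈ Finset.Icc 1 k, Real.sqrt (P i) * h i)
    (hηt : ∀ k, ηt k = ((σ2 + ∑ i ∈ Finset.Icc 1 k, P i * (h i) ^ 2) / S k) ^ 2)
    (hG : ∀ p η, G p η =
      (∑ k ∈ Finset.Icc 1 K, (Real.sqrt (p k) * h k / Real.sqrt η - 1) ^ 2) + σ2 / η)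
    -- low-SNR condition: J(K) ≤ 0
    (hlow : (∑ i ∈ Finset.Icc 1 (K - 1),
      Real.sqrt (P i) * h i * (Real.sqrt (P K) * h K - Real.sqrt (P i) * h i)) ≤ σ2) :
    ∀ (p : ℕ → ℝ) (η : ℝ), (∀ k, 1 ≤ k → k ≤ K → 0 ≤ p k ∧ p k ≤ P k) → 0 < η →
      G P (ηt K) ≤ G p η := by
  intro p η hp hη
  have hKI : K ∈ Finset.Icc 1 K := Finset.mem_Icc.mpr ⟨hK, le_rfl⟩
  have hmem : ∀ i ∈ Finset.Icc 1 K, 1 ≤ i ∧ i ≤ K := fun i hi => Finset.mem_Icc.mp hi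
  have hb0 : ∀ i ∈ Finset.Icc 1 K, 0 ≤ Real.sqrt (p i) * h i := fun i hi =>
    mul_nonneg (Real.sqrt_nonneg _) (hh i (hmem i hi).1 (hmem i hi).2).le
  have hB0 : ∀ i ∈ Finset.Icc 1 K, 0 < Real.sqrt (P i) * h i := fun i hi =>
    mul_pos (Real.sqrt_pos.mpr (hP i (hmem i hi).1 (hmem i hi).2))
      (hh i (hmem i hi).1 (hmem i hi).2)
  have hbB : ∀ i ∈ Finset.Icc 1 K, Real.sqrt (p i) * h i ≤ Real.sqrt (P i) * h i := fun i hi =>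
    mul_le_mul_of_nonneg_right (Real.sqrt_le_sqrt (hp i (hmem i hi).1 (hmem i hi).2).2)
      (hh i (hmem i hi).1 (hmem i hi).2).le
  have hBsq : ∀ i ∈ Finset.Icc 1 K, (Real.sqrt (P i) * h i)^2 = P i * h i^2 := fun i hi => by
    rw [mul_pow, Real.sq_sqrt (hP i (hmem i hi).1 (hmem i hi).2).le]
  have hbsq : ∀ i ∈ Finset.Icc 1 K, (Real.sqrt (p i) * h i)^2 = p i * h i^2 := fun i hi => by
    rw [mul_pow, Real.sq_sqrt (hp i (hmem i hi).1 (hmem i hi).2).1]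
  -- monotonicity
  have mono : ∀ m, m ≤ K → ∀ j, 1 ≤ j → j ≤ m → P j * h j ^ 2 ≤ P m * h m ^ 2 := by
    intro m
    induction m with
    | zero => intro _ j h1 h2; exfalso; omega
    | succ n ih =>
      intro hmK j h1 h2
      rcases Nat.lt_succ_iff_lt_or_eq.mp (Nat.lt_succ_of_le h2) with hlt | heq
      · exact le_trans (ih (by omega) j h1 (by omega)) (hord n (by omega) (by omega))
      · rw [heq]
  have hBK : ∀ i ∈ Finset.Icc 1 K, Real.sqrt (P i) * h i ≤ Real.sqrt (P K) * h K := by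
    intro i hi
    have hsq : (Real.sqrt (P i) * h i)^2 ≤ (Real.sqrt (P K) * h K)^2 := by
      rw [hBsq i hi, hBsq K hKI]
      exact mono K le_rfl i (hmem i hi).1 (hmem i hi).2
    calc Real.sqrt (P i) * h i
        = Real.sqrt ((Real.sqrt (P i) * h i)^2) := (Real.sqrt_sq (hB0 i hi).le).symm
      _ ≤ Real.sqrt ((Real.sqrt (P K) * h K)^2) := Real.sqrt_le_sqrt hsq
      _ = Real.sqrt (P K) * h K := Real.sqrt_sq (hB0 K hKI).le
  -- sum facts
  have SBpos : 0 < ∑ i ∈ Finset.Icc 1 K, Real.sqrt (P i) * h i :=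
    Finset.sum_pos hB0 ⟨K, hKI⟩
  have Sb0 : 0 ≤ ∑ i ∈ Finset.Icc 1 K, Real.sqrt (p i) * h i := Finset.sum_nonneg hb0
  have SbSB : (∑ i ∈ Finset.Icc 1 K, Real.sqrt (p i) * h i) ≤
      ∑ i ∈ Finset.Icc 1 K, Real.sqrt (P i) * h i := Finset.sum_le_sum hbB
  have hQBeq : (∑ i ∈ Finset.Icc 1 K, (Real.sqrt (P i) * h i)^2) =
      ∑ i ∈ Finset.Icc 1 K, P i * h i ^ 2 := Finset.sum_congr rfl hBsq
  have hQbeq : (∑ i ∈ Finset.Icc 1 K, (Real.sqrt (p i) * h i)^2) =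
      ∑ i ∈ Finset.Icc 1 K, p i * h i ^ 2 := Finset.sum_congr rfl hbsq
  have QB0 : 0 ≤ ∑ i ∈ Finset.Icc 1 K, P i * h i ^ 2 := by
    rw [← hQBeq]; exact Finset.sum_nonneg fun i hi => sq_nonneg _
  have Qb0 : 0 ≤ ∑ i ∈ Finset.Icc 1 K, p i * h i ^ 2 := by
    rw [← hQbeq]; exact Finset.sum_nonneg fun i hi => sq_nonneg _
  have Apos : 0 < σ2 + ∑ i ∈ Finset.Icc 1 K, P i * h i ^ 2 := by linarith
  have Dpos : 0 < σ2 + ∑ i ∈ Finset.Icc 1 K, p i * h i ^ 2 := by linarith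
  -- low-SNR rewritten over full range
  have hK1 : K - 1 + 1 = K := Nat.succ_pred_eq_of_pos hK
  have split : (∑ i ∈ Finset.Icc 1 K,
      Real.sqrt (P i) * h i * (Real.sqrt (P K) * h K - Real.sqrt (P i) * h i))
      = ∑ i ∈ Finset.Icc 1 (K - 1),
      Real.sqrt (P i) * h i * (Real.sqrt (P K) * h K - Real.sqrt (P i) * h i) := by
    conv_lhs => rw [← hK1]
    rw [Finset.sum_Icc_succ_top (by omega : 1 ≤ K - 1 + 1), hK1]
    simp
  have low2 : (∑ i ∈ Finset.Icc 1 K,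
      Real.sqrt (P i) * h i * (Real.sqrt (P K) * h K - Real.sqrt (P i) * h i)) ≤ σ2 := by
    rw [split]; exact hlow
  have expand : (∑ i ∈ Finset.Icc 1 K,
      Real.sqrt (P i) * h i * (Real.sqrt (P K) * h K - Real.sqrt (P i) * h i))
      = (∑ i ∈ Finset.Icc 1 K, Real.sqrt (P i) * h i) * (Real.sqrt (P K) * h K)
        - ∑ i ∈ Finset.Icc 1 K, P i * h i ^ 2 := by
    have per : ∀ i ∈ Finset.Icc 1 K,
        Real.sqrt (P i) * h i * (Real.sqrt (P K) * h K - Real.sqrt (P i) * h i)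
        = (Real.sqrt (P i) * h i) * (Real.sqrt (P K) * h K) - (Real.sqrt (P i) * h i)^2 :=
      fun i _ => by ring
    rw [Finset.sum_congr rfl per, Finset.sum_sub_distrib, ← Finset.sum_mul, hQBeq]
  have low' : (∑ i ∈ Finset.Icc 1 K, Real.sqrt (P i) * h i) * (Real.sqrt (P K) * h K)
      - (∑ i ∈ Finset.Icc 1 K, P i * h i ^ 2) ≤ σ2 := by
    rw [← expand]; exact low2
  -- key claim
  have keyC := auxC11 (Finset.Icc 1 K) K (fun i => Real.sqrt (P i) * h i)
    (fun i => Real.sqrt (p i) * h i) hb0 hbB hBK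
  rw [hQBeq, hQbeq] at keyC
  have hSb2 : (∑ i ∈ Finset.Icc 1 K, Real.sqrt (p i) * h i)^2 ≤
      (∑ i ∈ Finset.Icc 1 K, Real.sqrt (P i) * h i)^2 := pow_le_pow_left₀ Sb0 SbSB 2
  have h1 : 0 ≤ (σ2 - ((∑ i ∈ Finset.Icc 1 K, Real.sqrt (P i) * h i) * (Real.sqrt (P K) * h K)
      - ∑ i ∈ Finset.Icc 1 K, P i * h i ^ 2)) *
      ((∑ i ∈ Finset.Icc 1 K, Real.sqrt (P i) * h i)^2
        - (∑ i ∈ Finset.Icc 1 K, Real.sqrt (p i) * h i)^2) :=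
    mul_nonneg (by linarith) (by linarith)
  have m2 := mul_le_mul_of_nonneg_left keyC SBpos.le
  have key : (∑ i ∈ Finset.Icc 1 K, Real.sqrt (p i) * h i)^2 *
      (σ2 + ∑ i ∈ Finset.Icc 1 K, P i * h i ^ 2) ≤
      (∑ i ∈ Finset.Icc 1 K, Real.sqrt (P i) * h i)^2 *
      (σ2 + ∑ i ∈ Finset.Icc 1 K, p i * h i ^ 2) := by nlinarith [h1, m2]
  -- G formula
  have Gform : ∀ (q : ℕ → ℝ) (e : ℝ), 0 < e → (∀ k, 1 ≤ k → k ≤ K → 0 ≤ q k) →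
      G q e = (σ2 + ∑ i ∈ Finset.Icc 1 K, q i * h i ^ 2) * ((Real.sqrt e)⁻¹)^2
        - (∑ i ∈ Finset.Icc 1 K, Real.sqrt (q i) * h i) * (2 * (Real.sqrt e)⁻¹) + K := by
    intro q e he hq
    rw [hG]
    have hstep : ∀ k ∈ Finset.Icc 1 K, (Real.sqrt (q k) * h k / Real.sqrt e - 1)^2
        = (q k * h k ^ 2) * ((Real.sqrt e)⁻¹)^2
          - (Real.sqrt (q k) * h k) * (2 * (Real.sqrt e)⁻¹) + 1 := by
      intro k hk
      obtain ⟨h1k, h2k⟩ := Finset.mem_Icc.mp hk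
      have hqk : Real.sqrt (q k) ^ 2 = q k := Real.sq_sqrt (hq k h1k h2k)
      rw [div_eq_mul_inv]
      linear_combination (h k ^ 2 * ((Real.sqrt e)⁻¹)^2) * hqk
    have he2 : ((Real.sqrt e)⁻¹)^2 = e⁻¹ := by rw [inv_pow, Real.sq_sqrt he.le]
    rw [Finset.sum_congr rfl hstep, Finset.sum_add_distrib, Finset.sum_sub_distrib,
      ← Finset.sum_mul, ← Finset.sum_mul, Finset.sum_const, Nat.card_Icc,
      Nat.add_sub_cancel, nsmul_eq_mul, mul_one, he2, div_eq_mul_inv]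
    ring
  -- value at the optimum
  have hηtK : ηt K = ((σ2 + ∑ i ∈ Finset.Icc 1 K, P i * h i ^ 2) /
      (∑ i ∈ Finset.Icc 1 K, Real.sqrt (P i) * h i)) ^ 2 := by
    rw [hηt K, hS K]
  have hratpos : 0 < (σ2 + ∑ i ∈ Finset.Icc 1 K, P i * h i ^ 2) /
      (∑ i ∈ Finset.Icc 1 K, Real.sqrt (P i) * h i) := div_pos Apos SBpos
  have hηtpos : 0 < ηt K := by rw [hηtK]; positivity
  have hsqrt : Real.sqrt (ηt K) = (σ2 + ∑ i ∈ Finset.Icc 1 K, P i * h i ^ 2) /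
      (∑ i ∈ Finset.Icc 1 K, Real.sqrt (P i) * h i) := by
    rw [hηtK]; exact Real.sqrt_sq hratpos.le
  have GPval : G P (ηt K) = (K : ℝ) -
      (∑ i ∈ Finset.Icc 1 K, Real.sqrt (P i) * h i)^2 /
      (σ2 + ∑ i ∈ Finset.Icc 1 K, P i * h i ^ 2) := by
    rw [Gform P (ηt K) hηtpos (fun k a b => (hP k a b).le), hsqrt, inv_div]
    field_simp
    ring
  have Gpval := Gform p η hη (fun k a b => (hp k a b).1)
  rw [GPval, Gpval]
  have hdiv : (∑ i ∈ Finset.Icc 1 K, Real.sqrt (p i) * h i)^2 /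
      (σ2 + ∑ i ∈ Finset.Icc 1 K, p i * h i ^ 2) ≤
      (∑ i ∈ Finset.Icc 1 K, Real.sqrt (P i) * h i)^2 /
      (σ2 + ∑ i ∈ Finset.Icc 1 K, P i * h i ^ 2) :=
    (div_le_div_iff₀ Dpos Apos).mpr key
  have hDne : (σ2 + ∑ i ∈ Finset.Icc 1 K, p i * h i ^ 2) ≠ 0 := Dpos.ne'
  have hc : 0 ≤ (σ2 + ∑ i ∈ Finset.Icc 1 K, p i * h i ^ 2) * ((Real.sqrt η)⁻¹)^2
      - (∑ i ∈ Finset.Icc 1 K, Real.sqrt (p i) * h i) * (2 * (Real.sqrt η)⁻¹)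
      + (∑ i ∈ Finset.Icc 1 K, Real.sqrt (p i) * h i)^2 /
        (σ2 + ∑ i ∈ Finset.Icc 1 K, p i * h i ^ 2) := by
    have heq : ∀ t : ℝ, (σ2 + ∑ i ∈ Finset.Icc 1 K, p i * h i ^ 2) * t^2
        - (∑ i ∈ Finset.Icc 1 K, Real.sqrt (p i) * h i) * (2 * t)
        + (∑ i ∈ Finset.Icc 1 K, Real.sqrt (p i) * h i)^2 /
          (σ2 + ∑ i ∈ Finset.Icc 1 K, p i * h i ^ 2)
        = ((σ2 + ∑ i ∈ Finset.Icc 1 K, p i * h i ^ 2) * t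
            - ∑ i ∈ Finset.Icc 1 K, Real.sqrt (p i) * h i)^2 /
          (σ2 + ∑ i ∈ Finset.Icc 1 K, p i * h i ^ 2) := by
      intro t
      field_simp
      ring
    rw [heq]
    positivity
  linarith [hdiv, hc]
end

section
/- Let c > 0, η > 0 and μ ≥ 0. The function f(p) = (√p · c/√η − 1)² + μp on [0, ∞) attains its global minimum at p* = (c√η/(c² + ημ))² = c²η/(c² + ημ)², and the minimum value equals f(p*) = ημ/(c² + ημ). (Lemma 5 and eq. (24)) -/
/-- **Lemma 5 and eq. (24).** For `c > 0`, `η > 0`, `μ ≥ 0`, the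
function `f(p) = (√p·c/√η − 1)² + μp` on `[0, ∞)` attains its global minimum at
`p* = (c√η/(c² + ημ))² = c²η/(c² + ημ)²`, with minimum value `ημ/(c² + ημ)`. -/
theorem stmt12
    (c η μ : ℝ) (hc : 0 < c) (hη : 0 < η) (hμ : 0 ≤ μ)
    (f : ℝ → ℝ)
    (hf : ∀ p, f p = (Real.sqrt p * c / Real.sqrt η - 1) ^ 2 + μ * p) :
    (c * Real.sqrt η / (c ^ 2 + η * μ)) ^ 2 = c ^ 2 * η / (c ^ 2 + η * μ) ^ 2 ∧
    f (c ^ 2 * η / (c ^ 2 + η * μ) ^ 2) = η * μ / (c ^ 2 + η * μ) ∧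
    (∀ p, 0 ≤ p → f (c ^ 2 * η / (c ^ 2 + η * μ) ^ 2) ≤ f p) := by
  set s := Real.sqrt η with hs
  have hspos : 0 < s := Real.sqrt_pos.mpr hη
  have hs2 : s ^ 2 = η := Real.sq_sqrt hη.le
  clear_value s
  clear hs
  subst hs2
  have hD : 0 < c ^ 2 + s ^ 2 * μ := by positivity
  have hDne : (c ^ 2 + s ^ 2 * μ) ≠ 0 := ne_of_gt hD
  have hsne : s ≠ 0 := ne_of_gt hspos
  have hpstar : c ^ 2 * s ^ 2 / (c ^ 2 + s ^ 2 * μ) ^ 2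
      = (c * s / (c ^ 2 + s ^ 2 * μ)) ^ 2 := by
    field_simp
  have hsq : Real.sqrt (c ^ 2 * s ^ 2 / (c ^ 2 + s ^ 2 * μ) ^ 2)
      = c * s / (c ^ 2 + s ^ 2 * μ) := by
    rw [hpstar, Real.sqrt_sq (by positivity)]
  have hval : f (c ^ 2 * s ^ 2 / (c ^ 2 + s ^ 2 * μ) ^ 2)
      = s ^ 2 * μ / (c ^ 2 + s ^ 2 * μ) := by
    rw [hf, hsq]
    field_simp
    ring
  refine ⟨hpstar.symm, hval, ?_⟩
  intro p hp
  rw [hval, hf]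
  set t := Real.sqrt p with ht
  have htnn : 0 ≤ t := Real.sqrt_nonneg p
  have ht2 : t ^ 2 = p := Real.sq_sqrt hp
  clear_value t
  clear ht
  subst ht2
  rw [div_le_iff₀ hD]
  have key : s ^ 2 * μ = ((t * c / s - 1) ^ 2 + μ * t ^ 2) * (c ^ 2 + s ^ 2 * μ)
      - (t * (c ^ 2 + s ^ 2 * μ) - c * s) ^ 2 / s ^ 2 := by
    field_simp
    ring
  have h0 : 0 ≤ (t * (c ^ 2 + s ^ 2 * μ) - c * s) ^ 2 / s ^ 2 := by positivity
  linarith [key, h0]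
end

section
/- Let c_k > 0 and μ_k > 0 for 1 ≤ k ≤ K, let σ² > 0, and assume Σ_{k=1}^K c_k²/μ_k > σ². Let γ* > 0 be the unique positive solution of Σ_{k=1}^K (c_k²/μ_k)/((c_k²/μ_k)γ + 1)² = σ², set η* = 1/γ*, and define p_k* = c_k²η*/(c_k² + η*μ_k)² for each k. Then for every p ∈ [0, ∞)^K and every η > 0, L(p*, η*) ≤ L(p, η); i.e., the regularized channel-inversion powers p_k* = (c_k√(η*)/(c_k² + η*μ_k))² together with η* jointly minimize the per-state Lagrangian. (core of Theorem 2) -/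
/-!
Minimizing first over `p` for fixed `η`: each device term `(√p c/√η - 1)² + μ p` is a quadratic
in `√p`, with minimum `ημ/(c² + ημ)` attained at `p = c²η/(c² + ημ)²`. What remains is
the one-variable function `g(η) = ∑ ημ_k/(c_k² + ημ_k) + σ²/η`. The equation defining `γ* = 1/η*`
says `σ² = ∑ c_k²μ_kη*²/(c_k² + η*μ_k)²`, i.e. `g'(η*) = 0`, and splitting `σ²/η` along these
weights writes `g` as a sum of functions `η ↦ ημ/(c² + ημ) + w/η`, each minimized at `η*`.
-/

open Finset Real

noncomputable section

def deviceCost (c m η p : ℝ) : ℝ := (√p * c / √η - 1) ^ 2 + m * p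

def reducedLagrangian {ι : Type*} [Fintype ι] (c μ : ι → ℝ) (σ2 η : ℝ) : ℝ :=
  ∑ k, η * μ k / (c k ^ 2 + η * μ k) + σ2 / η

end

theorem mul_div_le_deviceCost {c m η p : ℝ} (hm : 0 < m) (hη : 0 < η) (hp : 0 ≤ p) :
    η * m / (c ^ 2 + η * m) ≤ deviceCost c m η p := by
  have hD : 0 < c ^ 2 + η * m := by positivity
  have key : deviceCost c m η p - η * m / (c ^ 2 + η * m)
      = ((c ^ 2 + η * m) * √p - c * √η) ^ 2 / (η * (c ^ 2 + η * m)) := by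
    rw [deviceCost, ← sq_sqrt hp, sqrt_sq (sqrt_nonneg p), ← sq_sqrt hη.le,
      sqrt_sq (sqrt_nonneg η)]
    have : 0 < √η := sqrt_pos.2 hη
    field_simp
    ring
  have : 0 ≤ deviceCost c m η p - η * m / (c ^ 2 + η * m) := key ▸ by positivity
  linarith

theorem deviceCost_optimal {c m η : ℝ} (hc : 0 ≤ c) (hm : 0 < m) (hη : 0 < η) :
    deviceCost c m η (c ^ 2 * η / (c ^ 2 + η * m) ^ 2) = η * m / (c ^ 2 + η * m) := by
  have hD : 0 < c ^ 2 + η * m := by positivity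
  have hsqrt : √(c ^ 2 * η / (c ^ 2 + η * m) ^ 2) = c * √η / (c ^ 2 + η * m) := by
    rw [← sqrt_sq (by positivity : 0 ≤ c * √η / (c ^ 2 + η * m)), div_pow, mul_pow,
      sq_sqrt hη.le]
  rw [deviceCost, hsqrt]
  field_simp
  ring

theorem mul_div_add_div_le_of_weight {a m x y : ℝ} (ha : 0 ≤ a) (hm : 0 < m) (hx : 0 < x)
    (hy : 0 < y) :
    y * m / (a + y * m) + a * m * y ^ 2 / (a + y * m) ^ 2 / y
      ≤ x * m / (a + x * m) + a * m * y ^ 2 / (a + y * m) ^ 2 / x := by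
  have hDx : 0 < a + x * m := by positivity
  have hDy : 0 < a + y * m := by positivity
  have key : (x * m / (a + x * m) + a * m * y ^ 2 / (a + y * m) ^ 2 / x)
      - (y * m / (a + y * m) + a * m * y ^ 2 / (a + y * m) ^ 2 / y)
      = m * a ^ 2 * (x - y) ^ 2 / (x * (a + x * m) * (a + y * m) ^ 2) := by
    field_simp
    ring
  have : 0 ≤ m * a ^ 2 * (x - y) ^ 2 / (x * (a + x * m) * (a + y * m) ^ 2) := by positivity
  linarith

section

variable {ι : Type*} [Fintype ι] {c μ : ι → ℝ} {σ2 η : ℝ}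

theorem reducedLagrangian_le_sum_deviceCost (hμ : ∀ k, 0 < μ k) (hη : 0 < η) {p : ι → ℝ}
    (hp : ∀ k, 0 ≤ p k) :
    reducedLagrangian c μ σ2 η ≤ ∑ k, deviceCost (c k) (μ k) η (p k) + σ2 / η := by
  unfold reducedLagrangian
  gcongr with k
  exact mul_div_le_deviceCost (hμ k) hη (hp k)

theorem sum_deviceCost_optimal (hc : ∀ k, 0 ≤ c k) (hμ : ∀ k, 0 < μ k) (hη : 0 < η) :
    ∑ k, deviceCost (c k) (μ k) η (c k ^ 2 * η / (c k ^ 2 + η * μ k) ^ 2) + σ2 / η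
      = reducedLagrangian c μ σ2 η := by
  unfold reducedLagrangian
  congr 1
  exact sum_congr rfl fun k _ => deviceCost_optimal (hc k) (hμ k) hη

theorem reducedLagrangian_le_of_stationary {ηs : ℝ} (hμ : ∀ k, 0 < μ k) (hηs : 0 < ηs)
    (hσ2 : σ2 = ∑ k, c k ^ 2 * μ k * ηs ^ 2 / (c k ^ 2 + ηs * μ k) ^ 2) (hη : 0 < η) :
    reducedLagrangian c μ σ2 ηs ≤ reducedLagrangian c μ σ2 η := by
  have split : ∀ τ, reducedLagrangian c μ σ2 τ = ∑ k, (τ * μ k / (c k ^ 2 + τ * μ k)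
      + c k ^ 2 * μ k * ηs ^ 2 / (c k ^ 2 + ηs * μ k) ^ 2 / τ) := by
    intro τ
    rw [reducedLagrangian, sum_add_distrib, hσ2, sum_div]
  rw [split, split]
  exact sum_le_sum fun k _ => mul_div_add_div_le_of_weight (sq_nonneg _) (hμ k) hη hηs

end

theorem stmt14_general
    (K : ℕ) (c μ : Fin K → ℝ) (σ2 : ℝ)
    (hc : ∀ k, 0 < c k) (hμ : ∀ k, 0 < μ k)
    (L : (Fin K → ℝ) → ℝ → ℝ)
    (hL : ∀ p η, L p η =
      (∑ k, (Real.sqrt (p k) * c k / Real.sqrt η - 1) ^ 2) + σ2 / η + ∑ k, μ k * p k)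
    (γstar : ℝ) (hγ : 0 < γstar)
    (hstat : (∑ k, ((c k) ^ 2 / μ k) / (((c k) ^ 2 / μ k) * γstar + 1) ^ 2) = σ2)
    (ηstar : ℝ) (hηstar : ηstar = 1 / γstar)
    (pstar : Fin K → ℝ)
    (hpstar : ∀ k, pstar k = (c k) ^ 2 * ηstar / ((c k) ^ 2 + ηstar * μ k) ^ 2) :
    ∀ (p : Fin K → ℝ) (η : ℝ), (∀ k, 0 ≤ p k) → 0 < η →
      L pstar ηstar ≤ L p η := by
  intro p η hp hη
  have hηs : 0 < ηstar := hηstar ▸ one_div_pos.2 hγ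
  have hL' : ∀ p η, L p η = ∑ k, deviceCost (c k) (μ k) η (p k) + σ2 / η := by
    intro p η
    simp only [hL, deviceCost, sum_add_distrib]
    ring
  have hσ2 : σ2 = ∑ k, c k ^ 2 * μ k * ηstar ^ 2 / (c k ^ 2 + ηstar * μ k) ^ 2 := by
    rw [← hstat, hηstar]
    refine sum_congr rfl fun k _ => ?_
    have := hμ k
    field_simp
  calc L pstar ηstar = reducedLagrangian c μ σ2 ηstar := by
        simp only [hL', hpstar]
        exact sum_deviceCost_optimal (fun k => (hc k).le) hμ hηs
    _ ≤ reducedLagrangian c μ σ2 η := reducedLagrangian_le_of_stationary hμ hηs hσ2 hη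
    _ ≤ L p η := hL' p η ▸ reducedLagrangian_le_sum_deviceCost hμ hη hp

/-- **core of Theorem 2.** Let `c_k, μ_k > 0`, `σ² > 0` with
`∑ c_k²/μ_k > σ²`. Let `γ* > 0` solve `∑ (c_k²/μ_k)/((c_k²/μ_k)γ + 1)² = σ²`,
set `η* = 1/γ*` and `p_k* = c_k²η*/(c_k² + η*μ_k)²`. Then the regularized
channel-inversion powers `p*` together with `η*` jointly minimize the per-state
Lagrangian `L(p, η) = ∑ (√(p_k)c_k/√η − 1)² + σ²/η + ∑ μ_k p_k` over all
`p ∈ [0,∞)^K` and `η > 0`. -/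
theorem stmt14
    (K : ℕ) (hK : 1 ≤ K) (c μ : Fin K → ℝ) (σ2 : ℝ)
    (hc : ∀ k, 0 < c k) (hμ : ∀ k, 0 < μ k) (hσ2 : 0 < σ2)
    (hsum : σ2 < ∑ k, (c k) ^ 2 / μ k)
    (L : (Fin K → ℝ) → ℝ → ℝ)
    (hL : ∀ p η, L p η =
      (∑ k, (Real.sqrt (p k) * c k / Real.sqrt η - 1) ^ 2) + σ2 / η + ∑ k, μ k * p k)
    (γstar : ℝ) (hγ : 0 < γstar)
    (hstat : (∑ k, ((c k) ^ 2 / μ k) / (((c k) ^ 2 / μ k) * γstar + 1) ^ 2) = σ2)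
    (ηstar : ℝ) (hηstar : ηstar = 1 / γstar)
    (pstar : Fin K → ℝ)
    (hpstar : ∀ k, pstar k = (c k) ^ 2 * ηstar / ((c k) ^ 2 + ηstar * μ k) ^ 2) :
    ∀ (p : Fin K → ℝ) (η : ℝ), (∀ k, 0 ≤ p k) → 0 < η →
      L pstar ηstar ≤ L p η :=
  stmt14_general K c μ σ2 hc hμ L hL γstar hγ hstat ηstar hηstar pstar hpstar
end

section
/- Let c > 0, p > 0 and σ² > 0. The function η ↦ (√p · c/√η − 1)² + σ²/η on (0, ∞) attains its global minimum at η* = ((σ² + p c²)/(√p · c))², and the minimum value equals σ²/(σ² + p c²). (eq. (34) and the resulting objective (37)) -/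
/-!
With `s = √p · c` and `r = √η`, the objective is `(s / r - 1)² + σ² / r²`, and since
`σ² + s² - σ² = s²` its excess over `σ² / (σ² + s²)` is the square
`(σ² + s² - s r)² / ((σ² + s²) r²)`, which vanishes exactly at `r = (σ² + s²) / s`.
-/

open Real

noncomputable def denoisingMSE (s σ2 r : ℝ) : ℝ := (s / r - 1) ^ 2 + σ2 / r ^ 2

section

variable (s σ2 : ℝ)

lemma denoisingMSE_sub_eq {r : ℝ} (hr : r ≠ 0) (hA : σ2 + s ^ 2 ≠ 0) :
    denoisingMSE s σ2 r - σ2 / (σ2 + s ^ 2) =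
      (σ2 + s ^ 2 - s * r) ^ 2 / ((σ2 + s ^ 2) * r ^ 2) := by
  unfold denoisingMSE
  field_simp
  ring

lemma div_le_denoisingMSE {r : ℝ} (hr : r ≠ 0) (hA : 0 < σ2 + s ^ 2) :
    σ2 / (σ2 + s ^ 2) ≤ denoisingMSE s σ2 r := by
  rw [← sub_nonneg, denoisingMSE_sub_eq s σ2 hr hA.ne']
  positivity

lemma denoisingMSE_div_eq (hs : s ≠ 0) (hA : σ2 + s ^ 2 ≠ 0) :
    denoisingMSE s σ2 ((σ2 + s ^ 2) / s) = σ2 / (σ2 + s ^ 2) := by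
  rw [← sub_eq_zero, denoisingMSE_sub_eq s σ2 (div_ne_zero hA hs) hA, mul_div_cancel₀ _ hs]
  simp

end

/-- **eq. (34) and objective (37).** For `c > 0`, `p > 0`, `σ² > 0`,
the function `η ↦ (√p·c/√η − 1)² + σ²/η` on `(0, ∞)` attains its global minimum
at `η* = ((σ² + pc²)/(√p·c))²`, with minimum value `σ²/(σ² + pc²)`. -/
theorem stmt16
    (c p σ2 : ℝ) (hc : 0 < c) (hp : 0 < p) (hσ2 : 0 < σ2)
    (f : ℝ → ℝ)
    (hf : ∀ η, f η = (Real.sqrt p * c / Real.sqrt η - 1) ^ 2 + σ2 / η) :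
    f (((σ2 + p * c ^ 2) / (Real.sqrt p * c)) ^ 2) = σ2 / (σ2 + p * c ^ 2) ∧
    (∀ η, 0 < η → f (((σ2 + p * c ^ 2) / (Real.sqrt p * c)) ^ 2) ≤ f η) := by
  set s := √p * c
  have hs : 0 < s := by positivity
  have hA : 0 < σ2 + s ^ 2 := by positivity
  have hs2 : s ^ 2 = p * c ^ 2 := by rw [mul_pow, sq_sqrt hp.le]
  have hf_sqrt : ∀ η, 0 ≤ η → f η = denoisingMSE s σ2 √η := fun η hη => by
    rw [hf, denoisingMSE, sq_sqrt hη]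
  have hopt : f (((σ2 + s ^ 2) / s) ^ 2) = σ2 / (σ2 + s ^ 2) := by
    rw [hf_sqrt _ (sq_nonneg _), sqrt_sq (by positivity)]
    exact denoisingMSE_div_eq s σ2 hs.ne' hA.ne'
  rw [← hs2]
  refine ⟨hopt, fun η hη => ?_⟩
  rw [hopt, hf_sqrt η hη.le]
  exact div_le_denoisingMSE s σ2 (sqrt_pos.2 hη).ne' hA
end

section
/- Let σ² > 0, μ > 0 and set s = √(μσ²). The optimal water-filling power p(x) = (√(σ²)/(√μ · x²))·(x − s), viewed as a function of the channel magnitude x on (s, ∞), is strictly increasing on (s, 2s] and strictly decreasing on [2s, ∞); in particular it attains its maximum at x = 2s. (monotonicity property of the channel-inversion water-filling power control, Remark 4 / Theorem 4) -/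
/-- **Remark 4 / Theorem 4.** For `σ² > 0`, `μ > 0`, `s = √(μσ²)`,
the optimal water-filling power `p(x) = (√(σ²)/(√μ·x²))·(x − s)` as a function of
the channel magnitude `x` on `(s, ∞)` is strictly increasing on `(s, 2s]` and
strictly decreasing on `[2s, ∞)`; in particular it is maximized at `x = 2s`. -/
theorem stmt18
    (σ2 μ : ℝ) (hσ2 : 0 < σ2) (hμ : 0 < μ)
    (s : ℝ) (hs : s = Real.sqrt (μ * σ2))
    (p : ℝ → ℝ)
    (hp : ∀ x, p x = Real.sqrt σ2 / (Real.sqrt μ * x ^ 2) * (x - s)) :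
    StrictMonoOn p (Set.Ioc s (2 * s)) ∧
    StrictAntiOn p (Set.Ici (2 * s)) ∧
    (∀ x, s < x → p x ≤ p (2 * s)) := by
  have hs0 : 0 < s := by rw [hs]; exact Real.sqrt_pos.2 (mul_pos hμ hσ2)
  set c := Real.sqrt σ2 / Real.sqrt μ with hc
  have hc0 : 0 < c := div_pos (Real.sqrt_pos.2 hσ2) (Real.sqrt_pos.2 hμ)
  have hp' : ∀ x, p x = c * ((x - s) / x ^ 2) := by
    intro x; rw [hp, hc]; ring
  have key : ∀ x y : ℝ, 0 < x → 0 < y → (x - s) * y ^ 2 < (y - s) * x ^ 2 →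
      p x < p y := by
    intro x y hx hy h
    rw [hp' x, hp' y]
    refine mul_lt_mul_of_pos_left ?_ hc0
    rw [div_lt_div_iff₀ (by positivity) (by positivity)]
    exact h
  refine ⟨?_, ?_, ?_⟩
  · intro x hx y hy hxy
    refine key x y (lt_trans hs0 hx.1) (lt_trans (lt_trans hs0 hx.1) hxy) ?_
    have h1 : y * (x - s) ≤ 2 * s * (x - s) :=
      mul_le_mul_of_nonneg_right hy.2 (by linarith [hx.1])
    have h3 : 0 < s * x - y * (x - s) := by nlinarith [hx.1, hy.2, hx.2]
    nlinarith [mul_pos (sub_pos.2 hxy) h3]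
  · intro x hx y hy hxy
    have hx2 : 2 * s ≤ x := hx
    refine key y x (by linarith) (by linarith) ?_
    have hxs : 0 < x - s := by linarith
    have h1 : x * (x - s) < y * (x - s) := mul_lt_mul_of_pos_right hxy hxs
    have h2 : x * s ≤ x * (x - s) :=
      mul_le_mul_of_nonneg_left (by linarith) (by linarith)
    have h4 : 0 < x * y - s * x - s * y := by nlinarith
    nlinarith [mul_pos (sub_pos.2 hxy) h4]
  · intro x hx
    rcases eq_or_ne x (2 * s) with h | h
    · rw [h]
    · have hsq : 0 < (x - 2 * s) ^ 2 := by
        have : x - 2 * s ≠ 0 := sub_ne_zero.2 h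
        positivity
      refine le_of_lt (key x (2 * s) (lt_trans hs0 hx) (by linarith) ?_)
      nlinarith [mul_pos hs0 hsq]
end

section
/- Let σ² > 0, μ > 0, set s = √(μσ²), and for x > s let p(x) = (√(σ²)/(√μ · x²))·(x − s) and η(x) = ((σ² + p(x)·x²)/(√(p(x)) · x))². Then η(x) = (σ² + u(x))²/u(x) with u(x) = (√(σ²)/√μ)·(x − s), and η is strictly decreasing on (s, 2s] and strictly increasing on [2s, ∞), attaining its minimum at x = 2s (the 'V'-shape of the optimal denoising factor). (Remark 5 / Theorem 4) -/
/-- **Remark 5 / Theorem 4.** For `σ² > 0`, `μ > 0`, `s = √(μσ²)`,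
with `p(x) = (√(σ²)/(√μ·x²))·(x − s)` and
`η(x) = ((σ² + p(x)·x²)/(√(p(x))·x))²` for `x > s`, one has
`η(x) = (σ² + u(x))²/u(x)` where `u(x) = (√(σ²)/√μ)·(x − s)`, and `η` is strictly
decreasing on `(s, 2s]` and strictly increasing on `[2s, ∞)`, attaining its
minimum at `x = 2s` (the 'V'-shape of the optimal denoising factor). -/
theorem stmt19
    (σ2 μ : ℝ) (hσ2 : 0 < σ2) (hμ : 0 < μ)
    (s : ℝ) (hs : s = Real.sqrt (μ * σ2))
    (p u η : ℝ → ℝ)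
    (hp : ∀ x, p x = Real.sqrt σ2 / (Real.sqrt μ * x ^ 2) * (x - s))
    (hu : ∀ x, u x = Real.sqrt σ2 / Real.sqrt μ * (x - s))
    (hη : ∀ x, η x = ((σ2 + p x * x ^ 2) / (Real.sqrt (p x) * x)) ^ 2) :
    (∀ x, s < x → η x = (σ2 + u x) ^ 2 / u x) ∧
    StrictAntiOn η (Set.Ioc s (2 * s)) ∧
    StrictMonoOn η (Set.Ici (2 * s)) ∧
    (∀ x, s < x → η (2 * s) ≤ η x) := by
  have hspos : 0 < s := by
    rw [hs]; exact Real.sqrt_pos.mpr (mul_pos hμ hσ2)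
  have hsqμ : 0 < Real.sqrt μ := Real.sqrt_pos.mpr hμ
  have hsqσ : 0 < Real.sqrt σ2 := Real.sqrt_pos.mpr hσ2
  set c : ℝ := Real.sqrt σ2 / Real.sqrt μ with hc
  have hcpos : 0 < c := div_pos hsqσ hsqμ
  have hsμσ : s = Real.sqrt μ * Real.sqrt σ2 := by
    rw [hs, Real.sqrt_mul hμ.le]
  have hcs : c * s = σ2 := by
    rw [hc, hsμσ]
    field_simp
    nlinarith [Real.sq_sqrt hσ2.le, Real.sq_sqrt hμ.le]
  -- key equality
  have key : ∀ x, s < x → η x = (σ2 + u x) ^ 2 / u x := by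
    intro x hx
    have hx0 : 0 < x := hspos.trans hx
    have hux : 0 < u x := by
      rw [hu]; exact mul_pos hcpos (by linarith)
    have hpx2 : p x * x ^ 2 = u x := by
      rw [hp, hu, hc]
      field_simp
    have hpx : 0 < p x := by
      have := hpx2
      nlinarith [sq_nonneg x]
    rw [hη, div_pow, mul_pow, Real.sq_sqrt hpx.le, hpx2]
  -- basic comparison lemma
  have comp_lt : ∀ a b : ℝ, 0 < a → a < b → a * b < σ2 ^ 2 →
      (σ2 + b) ^ 2 / b < (σ2 + a) ^ 2 / a := by
    intro a b ha hab h
    have hb : 0 < b := ha.trans hab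
    rw [div_lt_div_iff₀ hb ha]
    nlinarith
  have comp_gt : ∀ a b : ℝ, 0 < a → a < b → σ2 ^ 2 < a * b →
      (σ2 + a) ^ 2 / a < (σ2 + b) ^ 2 / b := by
    intro a b ha hab h
    have hb : 0 < b := ha.trans hab
    rw [div_lt_div_iff₀ ha hb]
    nlinarith
  have humono : ∀ x y : ℝ, x < y → u x < u y := by
    intro x y hxy
    rw [hu, hu]
    have : x - s < y - s := by linarith
    exact (mul_lt_mul_iff_right₀ hcpos).mpr this
  have hu2s : u (2 * s) = σ2 := by
    rw [hu]
    have : 2 * s - s = s := by ring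
    rw [this, hcs]
  have hupos : ∀ x, s < x → 0 < u x := fun x hx => by
    rw [hu]; exact mul_pos hcpos (by linarith)
  have anti : StrictAntiOn η (Set.Ioc s (2 * s)) := by
    intro x hx y hy hxy
    rw [key x hx.1, key y hy.1]
    apply comp_lt _ _ (hupos x hx.1) (humono x y hxy)
    have h1 : u x < σ2 := by
      calc u x < u y := humono x y hxy
        _ ≤ u (2 * s) := by
            rcases eq_or_lt_of_le hy.2 with h | h
            · rw [h]
            · exact (humono y (2 * s) h).le
        _ = σ2 := hu2s
    have h2 : u y ≤ σ2 := by
      rw [← hu2s]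
      rcases eq_or_lt_of_le hy.2 with h | h
      · rw [h]
      · exact (humono y (2 * s) h).le
    nlinarith [hupos x hx.1, hupos y hy.1]
  have mono : StrictMonoOn η (Set.Ici (2 * s)) := by
    intro x hx y hy hxy
    have hx2 : s < x := by
      have : (2:ℝ) * s ≤ x := hx
      linarith
    have hy2 : s < y := hx2.trans hxy
    rw [key x hx2, key y hy2]
    apply comp_gt _ _ (hupos x hx2) (humono x y hxy)
    have h1 : σ2 ≤ u x := by
      rw [← hu2s]
      rcases eq_or_lt_of_le (show (2:ℝ) * s ≤ x from hx) with h | h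
      · rw [h]
      · exact (humono (2 * s) x h).le
    have h2 : σ2 < u y := by
      calc σ2 ≤ u x := h1
        _ < u y := humono x y hxy
    nlinarith
  refine ⟨key, anti, mono, ?_⟩
  intro x hx
  have h2s : s < 2 * s := by linarith
  rcases lt_trichotomy x (2 * s) with h | h | h
  · exact (anti ⟨hx, h.le⟩ ⟨h2s, le_refl _⟩ h).le
  · rw [h]
  · exact (mono (Set.mem_Ici.mpr (le_refl _)) h.le h).le
end
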